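/- arXiv:2508.18165 — 10 statements merged into one kernel-verified Lean document; each statement's English description precedes it below -/
import Mathlib

section
/- Let C ⊆ ℝ^n be a closed convex cone containing no lines, let U ⊆ ℝ^n be a linear subspace and let p : ℝ^n → U be a linear projection onto U. Set C̃ := p(C). Then every extremal element of C̃ is the image under p of some extremal element of C; i.e., for every x ∈ C̃ \ {0} such that any decomposition x = x₀ + x₁ with x₀, x₁ ∈ C̃ forces x₀, x₁ ∈ ℝ≥0·x, there exists an extremal element y ∈ C with p(y) = x. -/
open Set

/-- `x` is an extremal element of the convex cone `C`: it is a nonzero element of `C` such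
that every decomposition `x = y + z` with `y, z ∈ C` forces `y` and `z` to be nonnegative
multiples of `x`. -/
def IsExtremalIn {E : Type*} [AddCommGroup E] [Module ℝ E] (C : Set E) (x : E) : Prop :=
  x ∈ C ∧ x ≠ 0 ∧ ∀ y ∈ C, ∀ z ∈ C, x = y + z →
    (∃ a : ℝ, 0 ≤ a ∧ y = a • x) ∧ (∃ b : ℝ, 0 ≤ b ∧ z = b • x)

lemma mySum_extend {ι κ M : Type*} [Fintype ι] [Fintype κ] [AddCommMonoid M]
    (f : ι ↪ κ) (u : κ → M) (hu : ∀ j, (¬ ∃ i, f i = j) → u j = 0) :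
    ∑ j, u j = ∑ i, u (f i) := by
  classical
  rw [← Finset.sum_image (g := ⇑f) (f := u) (s := Finset.univ)
    (fun a _ b _ h => f.injective h)]
  refine (Finset.sum_subset (Finset.subset_univ _) ?_).symm
  intro j _ hj
  exact hu j (by simpa [Finset.mem_image] using hj)

lemma myIsCompact_convexHull {n : ℕ} {S : Set (Fin n → ℝ)} (hS : IsCompact S) :
    IsCompact (convexHull ℝ S) := by
  classical
  rcases S.eq_empty_or_nonempty with rfl | ⟨s₀, hs₀⟩
  · simpa using isCompact_empty
  let g : (Fin (n+1) → ℝ) × (Fin (n+1) → (Fin n → ℝ)) → (Fin n → ℝ) := fun q => ∑ i, q.1 i • q.2 i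
  have hg : Continuous g :=
    continuous_finset_sum _ fun i _ =>
      ((continuous_apply i).comp continuous_fst).smul
        ((continuous_apply i).comp continuous_snd)
  have hK : IsCompact ((stdSimplex ℝ (Fin (n+1))) ×ˢ (Set.univ.pi fun _ : Fin (n+1) => S)) :=
    (isCompact_stdSimplex ℝ _).prod (isCompact_univ_pi fun _ => hS)
  have himg : convexHull ℝ S =
      g '' ((stdSimplex ℝ (Fin (n+1))) ×ˢ (Set.univ.pi fun _ : Fin (n+1) => S)) := by
    apply Subset.antisymm
    · intro y hy
      obtain ⟨ι, hι, z, w, hzS, hai, hw0, hw1, hsum⟩ :=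
        eq_pos_convex_span_of_mem_convexHull hy
      have hcard : Fintype.card ι ≤ n + 1 := by
        have h1 := hai.card_le_finrank_succ
        have h2 : Module.finrank ℝ (vectorSpan ℝ (Set.range z)) ≤
            Module.finrank ℝ (Fin n → ℝ) := Submodule.finrank_le _
        have h3 : Module.finrank ℝ (Fin n → ℝ) = n := by
          rw [Module.finrank_fintype_fun_eq_card, Fintype.card_fin]
        omega
      obtain ⟨f⟩ : Nonempty (ι ↪ Fin (n+1)) :=
        Function.Embedding.nonempty_of_card_le (by simpa using hcard)
      set w' : Fin (n+1) → ℝ := Function.extend f w 0 with hw'def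
      set z' : Fin (n+1) → (Fin n → ℝ) := Function.extend f z (fun _ => s₀) with hz'def
      have hw'nonneg : ∀ j, 0 ≤ w' j := by
        intro j
        rcases em (∃ i, f i = j) with ⟨i, rfl⟩ | hj
        · rw [hw'def, f.injective.extend_apply]; exact (hw0 i).le
        · rw [hw'def, Function.extend_apply' _ _ _ hj]; rfl
      have hw'sum : ∑ j, w' j = 1 := by
        rw [mySum_extend f w' (fun j hj => by rw [hw'def, Function.extend_apply' _ _ _ hj]; rfl)]
        rw [← hw1]
        exact Finset.sum_congr rfl fun i _ => by rw [hw'def, f.injective.extend_apply]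
      have hz'S : ∀ j, z' j ∈ S := by
        intro j
        rcases em (∃ i, f i = j) with ⟨i, rfl⟩ | hj
        · rw [hz'def, f.injective.extend_apply]; exact hzS (Set.mem_range_self i)
        · rw [hz'def, Function.extend_apply' _ _ _ hj]; exact hs₀
      refine ⟨(w', z'), ⟨⟨hw'nonneg, hw'sum⟩, fun j _ => hz'S j⟩, ?_⟩
      show (∑ j, w' j • z' j) = y
      rw [mySum_extend f (fun j => w' j • z' j) (fun j hj => by
        show w' j • z' j = 0
        rw [hw'def, Function.extend_apply' _ _ _ hj]
        show (0 : Fin (n+1) → ℝ) j • _ = 0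
        simp)]
      rw [← hsum]
      refine Finset.sum_congr rfl fun i _ => ?_
      rw [hw'def, hz'def, f.injective.extend_apply, f.injective.extend_apply]
    · rintro y ⟨⟨w, v⟩, ⟨hw, hv⟩, rfl⟩
      show (∑ i, w i • v i) ∈ convexHull ℝ S
      rw [← Finset.centerMass_eq_of_sum_1 _ _ hw.2]
      exact Finset.centerMass_mem_convexHull _ (fun i _ => hw.1 i) (by rw [hw.2]; norm_num)
        (fun i _ => hv i (Set.mem_univ i))
  rw [himg]
  exact hK.image hg

lemma myExists_functional {n : ℕ} (R : Set (Fin n → ℝ))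
    (hRclosed : IsClosed R)
    (hsmul : ∀ x ∈ R, ∀ c : ℝ, 0 ≤ c → c • x ∈ R)
    (hadd : ∀ x ∈ R, ∀ y ∈ R, x + y ∈ R)
    (hline : ∀ x ∈ R, -x ∈ R → x = 0) :
    ∃ ℓ : (Fin n → ℝ) →L[ℝ] ℝ, ∀ k ∈ R, k ≠ 0 → 0 < ℓ k := by
  classical
  set S : Set (Fin n → ℝ) := R ∩ Metric.sphere 0 1 with hSdef
  have hScompact : IsCompact S := (isCompact_sphere 0 1).inter_left hRclosed
  have hHcompact : IsCompact (convexHull ℝ S) := myIsCompact_convexHull hScompact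
  have h0H : (0 : Fin n → ℝ) ∉ convexHull ℝ S := by
    intro h0
    obtain ⟨ι, hι, z, w, hzS, hai, hw0, hw1, hsum⟩ := eq_pos_convex_span_of_mem_convexHull h0
    have hne : Nonempty ι := by
      by_contra hne
      rw [not_nonempty_iff] at hne
      simp [Finset.univ_eq_empty] at hw1
    obtain ⟨i₀⟩ := hne
    have hzR : ∀ i, z i ∈ R := fun i => (hzS (Set.mem_range_self i)).1
    have hsummem : ∑ i ∈ Finset.univ.erase i₀, w i • z i ∈ R := by
      apply Finset.sum_induction _ (· ∈ R) (fun a b ha hb => hadd a ha b hb)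
      · simpa using hsmul (z i₀) (hzR i₀) 0 le_rfl
      · exact fun i _ => hsmul (z i) (hzR i) (w i) (hw0 i).le
    have h2 : w i₀ • z i₀ + ∑ i ∈ Finset.univ.erase i₀, w i • z i = 0 := by
      rw [← hsum, Finset.add_sum_erase Finset.univ (fun i => w i • z i) (Finset.mem_univ i₀)]
    have hmem : w i₀ • z i₀ ∈ R := hsmul _ (hzR i₀) _ (hw0 i₀).le
    have hnegmem : -(w i₀ • z i₀) ∈ R := by
      rw [neg_eq_of_add_eq_zero_right h2]; exact hsummem
    have hz0 : w i₀ • z i₀ = 0 := hline _ hmem hnegmem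
    have : z i₀ = 0 := by
      rcases smul_eq_zero.1 hz0 with h | h
      · exact absurd h (ne_of_gt (hw0 i₀))
      · exact h
    have hsph : z i₀ ∈ Metric.sphere (0 : Fin n → ℝ) 1 := (hzS (Set.mem_range_self i₀)).2
    rw [this] at hsph
    simp at hsph
  obtain ⟨ℓ, u, hℓ0, hℓH⟩ :=
    geometric_hahn_banach_point_closed (convex_convexHull ℝ S) hHcompact.isClosed h0H
  have hu : 0 < u := by simpa using hℓ0
  refine ⟨ℓ, fun k hk hk0 => ?_⟩
  have hnorm : (0:ℝ) < ‖k‖ := norm_pos_iff.2 hk0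
  have hmemS : ‖k‖⁻¹ • k ∈ S := by
    refine ⟨hsmul k hk _ (inv_nonneg.2 hnorm.le), ?_⟩
    rw [mem_sphere_zero_iff_norm, norm_smul, norm_inv, norm_norm]
    field_simp
  have := hℓH _ (subset_convexHull ℝ S hmemS)
  rw [map_smul] at this
  have h3 : 0 < ‖k‖⁻¹ * ℓ k := lt_trans hu this
  have h4 : ‖k‖ * (‖k‖⁻¹ * ℓ k) = ℓ k := by field_simp
  have := mul_pos hnorm h3
  linarith

open Filter Topology in
theorem stmt0' (n : ℕ) (C : Set (Fin n → ℝ))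
    (hclosed : IsClosed C)
    (hsmul : ∀ x ∈ C, ∀ c : ℝ, 0 ≤ c → c • x ∈ C)
    (hadd : ∀ x ∈ C, ∀ y ∈ C, x + y ∈ C)
    (hline : ∀ x ∈ C, -x ∈ C → x = 0)
    (U : Submodule ℝ (Fin n → ℝ)) (p : (Fin n → ℝ) →ₗ[ℝ] (Fin n → ℝ))
    (hrange : LinearMap.range p = U) (hproj : ∀ u ∈ U, p u = u)
    (x : Fin n → ℝ) (hx : (x ∈ p '' C ∧ x ≠ 0 ∧ ∀ y ∈ p '' C, ∀ z ∈ p '' C, x = y + z →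
      (∃ a : ℝ, 0 ≤ a ∧ y = a • x) ∧ (∃ b : ℝ, 0 ≤ b ∧ z = b • x))) :
    ∃ y, (y ∈ C ∧ y ≠ 0 ∧ ∀ y₁ ∈ C, ∀ y₂ ∈ C, y = y₁ + y₂ →
      (∃ a : ℝ, 0 ≤ a ∧ y₁ = a • y) ∧ (∃ b : ℝ, 0 ≤ b ∧ y₂ = b • y)) ∧ p y = x := by
  classical
  obtain ⟨⟨y₀, hy₀C, hy₀x⟩, hxne, hxext⟩ := hx
  have hpcont : Continuous p := p.continuous_of_finiteDimensional
  set D : Set (Fin n → ℝ) := {y | y ∈ C ∧ p y = x} with hDdef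
  have hDclosed : IsClosed D := hclosed.inter (isClosed_eq hpcont continuous_const)
  set R : Set (Fin n → ℝ) := {y | y ∈ C ∧ p y = 0} with hRdef
  have hRclosed : IsClosed R := hclosed.inter (isClosed_eq hpcont continuous_const)
  obtain ⟨ℓ, hℓ⟩ := myExists_functional R hRclosed
    (fun y hy c hc => ⟨hsmul y hy.1 c hc, by rw [map_smul, hy.2, smul_zero]⟩)
    (fun y hy z hz => ⟨hadd y hy.1 z hz.1, by rw [map_add, hy.2, hz.2, add_zero]⟩)
    (fun y hy hny => hline y hy.1 hny.1)
  set c : ℝ := ℓ y₀ with hcdef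
  set K : Set (Fin n → ℝ) := D ∩ {y | ℓ y ≤ c} with hKdef
  have hKclosed : IsClosed K := hDclosed.inter (isClosed_le ℓ.continuous continuous_const)
  have hy₀D : y₀ ∈ D := ⟨hy₀C, hy₀x⟩
  have hy₀K : y₀ ∈ K := ⟨hy₀D, show ℓ y₀ ≤ c from le_rfl⟩
  have hbdd : Bornology.IsBounded K := by
    by_contra hb
    have seq : ∀ m : ℕ, ∃ y ∈ K, (m : ℝ) < ‖y‖ := by
      intro m
      by_contra h
      push_neg at h
      exact hb (isBounded_iff_forall_norm_le.2 ⟨m, h⟩)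
    choose y hyK hynorm using seq
    have hpos : ∀ m, 0 < ‖y m‖ := fun m => lt_of_le_of_lt (Nat.cast_nonneg m) (hynorm m)
    set v : ℕ → (Fin n → ℝ) := fun m => ‖y m‖⁻¹ • y m with hvdef
    have hv_sphere : ∀ m, v m ∈ Metric.sphere (0 : Fin n → ℝ) 1 := by
      intro m
      rw [mem_sphere_zero_iff_norm, hvdef]
      rw [norm_smul, norm_inv, norm_norm]
      field_simp
      exact div_self (ne_of_gt (hpos m))
    obtain ⟨vlim, hvlim, φ, hφmono, hφtendsto⟩ :=
      (isCompact_sphere (0 : Fin n → ℝ) 1).tendsto_subseq hv_sphere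
    have hnormtend : Tendsto (fun m => ‖y (φ m)‖) atTop atTop := by
      apply tendsto_atTop_mono (f := fun m : ℕ => (m : ℝ))
      · exact fun m => le_trans (Nat.cast_le.2 hφmono.le_apply) (hynorm (φ m)).le
      · exact tendsto_natCast_atTop_atTop
    have hinvtend : Tendsto (fun m => ‖y (φ m)‖⁻¹) atTop (𝓝 0) :=
      tendsto_inv_atTop_zero.comp hnormtend
    have hvC : ∀ m, v m ∈ C := fun m =>
      hsmul _ (hyK m).1.1 _ (inv_nonneg.2 (hpos m).le)
    have hvlimC : vlim ∈ C :=
      hclosed.mem_of_tendsto hφtendsto (Filter.Eventually.of_forall fun m => hvC (φ m))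
    have hpvlim : p vlim = 0 := by
      have h1 : Tendsto (fun m => p (v (φ m))) atTop (𝓝 (p vlim)) :=
        (hpcont.tendsto _).comp hφtendsto
      have h2 : (fun m => p (v (φ m))) = fun m => ‖y (φ m)‖⁻¹ • x := by
        funext m
        rw [hvdef]
        show p (‖y (φ m)‖⁻¹ • y (φ m)) = _
        rw [map_smul, (hyK (φ m)).1.2]
      rw [h2] at h1
      have h3 : Tendsto (fun m => ‖y (φ m)‖⁻¹ • x) atTop (𝓝 ((0:ℝ) • x)) :=
        hinvtend.smul_const x
      rw [zero_smul] at h3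
      exact tendsto_nhds_unique h1 h3
    have hℓvlim : ℓ vlim ≤ 0 := by
      have h1 : Tendsto (fun m => ℓ (v (φ m))) atTop (𝓝 (ℓ vlim)) :=
        (ℓ.continuous.tendsto _).comp hφtendsto
      have h3 : Tendsto (fun m => ‖y (φ m)‖⁻¹ * c) atTop (𝓝 0) := by
        have := hinvtend.mul_const c
        rwa [zero_mul] at this
      refine le_of_tendsto_of_tendsto' h1 h3 fun m => ?_
      show ℓ (‖y (φ m)‖⁻¹ • y (φ m)) ≤ _
      rw [map_smul]
      exact mul_le_mul_of_nonneg_left (hyK (φ m)).2 (inv_nonneg.2 (hpos (φ m)).le)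
    have hvlimne : vlim ≠ 0 := by
      intro h
      rw [h] at hvlim
      simp at hvlim
    exact absurd (hℓ vlim ⟨hvlimC, hpvlim⟩ hvlimne) (not_lt.2 hℓvlim)
  have hKcompact : IsCompact K := Metric.isCompact_of_isClosed_isBounded hKclosed hbdd
  obtain ⟨w, hwK, hwmin⟩ := hKcompact.exists_isMinOn ⟨y₀, hy₀K⟩ ℓ.continuous.continuousOn
  have hglobal : ∀ z ∈ D, ℓ w ≤ ℓ z := by
    intro z hz
    rcases le_or_gt (ℓ z) c with h | h
    · exact hwmin ⟨hz, h⟩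
    · exact le_trans (hwmin hy₀K) h.le
  set D' : Set (Fin n → ℝ) := {z | z ∈ D ∧ ℓ z = ℓ w} with hD'def
  have hD'closed : IsClosed D' := hDclosed.inter (isClosed_eq ℓ.continuous continuous_const)
  have hD'sub : D' ⊆ K := fun z hz => ⟨hz.1, show ℓ z ≤ c by rw [hz.2]; exact hwmin hy₀K⟩
  have hD'compact : IsCompact D' := hKcompact.of_isClosed_subset hD'closed hD'sub
  obtain ⟨yE, hyE⟩ := hD'compact.extremePoints_nonempty ⟨w, hwK.1, rfl⟩
  obtain ⟨hyED', hyEext⟩ := mem_extremePoints.1 hyE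
  have hextD : ∀ u ∈ D, ∀ v ∈ D, yE ∈ openSegment ℝ u v → u = yE ∧ v = yE := by
    intro u hu v hv hseg
    obtain ⟨a, b, ha, hb, hab, hsum⟩ := hseg
    have hu' : ℓ w ≤ ℓ u := hglobal u hu
    have hv' : ℓ w ≤ ℓ v := hglobal v hv
    have hval : a * ℓ u + b * ℓ v = ℓ w := by
      have := congrArg ℓ hsum
      rw [map_add, map_smul, map_smul] at this
      rw [← hyED'.2]
      exact this
    have hℓu : ℓ u = ℓ w := by
      by_contra h
      have h1 : ℓ w < ℓ u := lt_of_le_of_ne hu' (Ne.symm h)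
      have h2 := mul_lt_mul_of_pos_left h1 ha
      have h3 := mul_le_mul_of_nonneg_left hv' hb.le
      have h4 : a * ℓ w + b * ℓ w = ℓ w := by rw [← add_mul, hab, one_mul]
      linarith
    have hℓv : ℓ v = ℓ w := by
      by_contra h
      have h1 : ℓ w < ℓ v := lt_of_le_of_ne hv' (Ne.symm h)
      have h2 := mul_lt_mul_of_pos_left h1 hb
      have h3 := mul_le_mul_of_nonneg_left hu' ha.le
      have h4 : a * ℓ w + b * ℓ w = ℓ w := by rw [← add_mul, hab, one_mul]
      linarith
    exact hyEext u ⟨hu, hℓu⟩ v ⟨hv, hℓv⟩ ⟨a, b, ha, hb, hab, hsum⟩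
  have hyED : yE ∈ D := hyED'.1
  have hyEne : yE ≠ 0 := by
    intro h
    apply hxne
    rw [← hyED.2, h, map_zero]
  refine ⟨yE, ⟨hyED.1, hyEne, ?_⟩, hyED.2⟩
  intro y₁ hy₁ y₂ hy₂ heq
  have hxsum : x = p y₁ + p y₂ := by rw [← hyED.2, heq, map_add]
  obtain ⟨⟨a, ha, hpa⟩, ⟨b, hb, hpb⟩⟩ :=
    hxext (p y₁) ⟨y₁, hy₁, rfl⟩ (p y₂) ⟨y₂, hy₂, rfl⟩ hxsum
  have hab : a + b = 1 := by
    have h1 : ((a + b) - 1) • x = 0 := by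
      rw [sub_smul, add_smul, one_smul, ← hpa, ← hpb, ← hxsum, sub_self]
    rcases smul_eq_zero.1 h1 with h | h
    · linarith
    · exact absurd h hxne
  rcases eq_or_lt_of_le ha with ha0 | hapos
  · -- a = 0
    have hb1 : b = 1 := by linarith
    have hpy₁ : p y₁ = 0 := by rw [hpa, ← ha0, zero_smul]
    have hpy₂ : p y₂ = x := by rw [hpb, hb1, one_smul]
    have hu : y₂ ∈ D := ⟨hy₂, hpy₂⟩
    have hv : yE + y₁ ∈ D := ⟨hadd _ hyED.1 _ hy₁, by rw [map_add, hyED.2, hpy₁, add_zero]⟩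
    have hseg : yE ∈ openSegment ℝ y₂ (yE + y₁) := by
      refine ⟨1/2, 1/2, by norm_num, by norm_num, by norm_num, ?_⟩
      rw [heq]
      module
    obtain ⟨h1, h2⟩ := hextD _ hu _ hv hseg
    have hy₁0 : y₁ = 0 := by
      have := add_eq_left.1 h2
      exact this
    exact ⟨⟨0, le_rfl, by rw [hy₁0, zero_smul]⟩, ⟨1, zero_le_one, by rw [h1, one_smul]⟩⟩
  · rcases eq_or_lt_of_le hb with hb0 | hbpos
    · -- b = 0
      have ha1 : a = 1 := by linarith
      have hpy₂ : p y₂ = 0 := by rw [hpb, ← hb0, zero_smul]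
      have hpy₁ : p y₁ = x := by rw [hpa, ha1, one_smul]
      have hu : y₁ ∈ D := ⟨hy₁, hpy₁⟩
      have hv : yE + y₂ ∈ D := ⟨hadd _ hyED.1 _ hy₂, by rw [map_add, hyED.2, hpy₂, add_zero]⟩
      have hseg : yE ∈ openSegment ℝ y₁ (yE + y₂) := by
        refine ⟨1/2, 1/2, by norm_num, by norm_num, by norm_num, ?_⟩
        rw [heq]
        module
      obtain ⟨h1, h2⟩ := hextD _ hu _ hv hseg
      have hy₂0 : y₂ = 0 := add_eq_left.1 h2
      exact ⟨⟨1, zero_le_one, by rw [h1, one_smul]⟩, ⟨0, le_rfl, by rw [hy₂0, zero_smul]⟩⟩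
    · -- a, b > 0
      have hu : a⁻¹ • y₁ ∈ D := by
        refine ⟨hsmul _ hy₁ _ (inv_nonneg.2 ha), ?_⟩
        rw [map_smul, hpa, smul_smul, inv_mul_cancel₀ (ne_of_gt hapos), one_smul]
      have hv : b⁻¹ • y₂ ∈ D := by
        refine ⟨hsmul _ hy₂ _ (inv_nonneg.2 hb), ?_⟩
        rw [map_smul, hpb, smul_smul, inv_mul_cancel₀ (ne_of_gt hbpos), one_smul]
      have hseg : yE ∈ openSegment ℝ (a⁻¹ • y₁) (b⁻¹ • y₂) := by
        refine ⟨a, b, hapos, hbpos, hab, ?_⟩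
        rw [smul_smul, smul_smul, mul_inv_cancel₀ (ne_of_gt hapos),
          mul_inv_cancel₀ (ne_of_gt hbpos), one_smul, one_smul, heq]
      obtain ⟨h1, h2⟩ := hextD _ hu _ hv hseg
      constructor
      · exact ⟨a, ha, by rw [← h1, smul_smul, mul_inv_cancel₀ (ne_of_gt hapos), one_smul]⟩
      · exact ⟨b, hb, by rw [← h2, smul_smul, mul_inv_cancel₀ (ne_of_gt hbpos), one_smul]⟩


/-- Every extremal element of the projection `p '' C` of a closed, line-free convex cone
`C ⊆ ℝⁿ` under a linear projection `p` onto a subspace `U` is the image of an extremal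
element of `C`. -/
theorem stmt0 (n : ℕ) (C : Set (Fin n → ℝ))
    (hclosed : IsClosed C)
    (hsmul : ∀ x ∈ C, ∀ c : ℝ, 0 ≤ c → c • x ∈ C)
    (hadd : ∀ x ∈ C, ∀ y ∈ C, x + y ∈ C)
    (hline : ∀ x ∈ C, -x ∈ C → x = 0)
    (U : Submodule ℝ (Fin n → ℝ)) (p : (Fin n → ℝ) →ₗ[ℝ] (Fin n → ℝ))
    (hrange : LinearMap.range p = U) (hproj : ∀ u ∈ U, p u = u)
    (x : Fin n → ℝ) (hx : IsExtremalIn (p '' C) x) :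
    ∃ y, IsExtremalIn C y ∧ p y = x := by
  exact stmt0' n C hclosed hsmul hadd hline U p hrange hproj x hx
end

section
/- Let L be a linear subspace of the space of real symmetric n×n matrices and let C = {X ∈ L : X positive semi-definite} (a linear spectrahedron). Then x ∈ C \ {0} is extremal in C if and only if for every z ∈ C, the proper inclusion ker x ⊊ ker z (kernels as subspaces of ℝ^n) implies z = 0. -/
open Matrix
open scoped RealInnerProductSpace

section Helpers

open Matrix
open scoped RealInnerProductSpace

variable {n : ℕ}

local notation "e" => WithLp.equiv 2 (Fin n → ℝ)

lemma inner_toEuclideanLin (A : Matrix (Fin n) (Fin n) ℝ) (v : EuclideanSpace ℝ (Fin n)) :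
    ⟪v, Matrix.toEuclideanLin A v⟫ = (e v) ⬝ᵥ A *ᵥ (e v) := by
  rw [toEuclideanLin_apply]
  change (A *ᵥ v.ofLp) ⬝ᵥ star v.ofLp = _
  rw [star_trivial, dotProduct_comm]; rfl

lemma mem_kerE_iff (A : Matrix (Fin n) (Fin n) ℝ) (v : EuclideanSpace ℝ (Fin n)) :
    v ∈ LinearMap.ker (Matrix.toEuclideanLin A) ↔ (e v) ∈ LinearMap.ker A.mulVecLin := by
  simp only [LinearMap.mem_ker, toEuclideanLin_apply, mulVecLin_apply]
  constructor
  · intro h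
    have := congrArg (e) h
    simpa using this
  · intro h
    rw [show A *ᵥ v.ofLp = 0 from h]; rfl

lemma quad_nonneg {x : Matrix (Fin n) (Fin n) ℝ} (hx : x.PosSemidef) (v : Fin n → ℝ) :
    0 ≤ v ⬝ᵥ x *ᵥ v := by simpa using hx.dotProduct_mulVec_nonneg v

lemma mulVec_eq_zero_iff' {x : Matrix (Fin n) (Fin n) ℝ} (hx : x.PosSemidef) (v : Fin n → ℝ) :
    x *ᵥ v = 0 ↔ v ⬝ᵥ x *ᵥ v = 0 := by
  rw [← hx.dotProduct_mulVec_zero_iff]; simp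

lemma dot_symm {z : Matrix (Fin n) (Fin n) ℝ} (hz : z.IsHermitian) (a b : Fin n → ℝ) :
    a ⬝ᵥ z *ᵥ b = (z *ᵥ a) ⬝ᵥ b := by
  rw [dotProduct_mulVec]
  congr 1
  rw [← mulVec_transpose]
  have : zᵀ = z := by
    have := hz
    simpa [Matrix.IsHermitian, conjTranspose_eq_transpose_of_trivial] using this
  rw [this]

/-- Key quantitative lemma: a PSD matrix whose kernel contains the kernel of `x`
is dominated by a multiple of `x`. -/
lemma exists_bound {x z : Matrix (Fin n) (Fin n) ℝ} (hx : x.PosSemidef) (hz : z.PosSemidef)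
    (h : LinearMap.ker x.mulVecLin ≤ LinearMap.ker z.mulVecLin) :
    ∃ c : ℝ, 0 < c ∧ ∀ v : Fin n → ℝ, v ⬝ᵥ z *ᵥ v ≤ c * (v ⬝ᵥ x *ᵥ v) := by
  set E := EuclideanSpace ℝ (Fin n)
  set T : E →ₗ[ℝ] E := Matrix.toEuclideanLin x with hT
  set K : Submodule ℝ E := LinearMap.ker T with hK
  by_cases hKtop : K = ⊤
  · -- x = 0 on everything, hence z = 0
    refine ⟨1, one_pos, fun v => ?_⟩
    have hv0 : (e).symm v ∈ K := by rw [hKtop]; trivial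
    have hv : (e ((e).symm v)) ∈ LinearMap.ker x.mulVecLin := (mem_kerE_iff x _).mp hv0
    have hv' : z *ᵥ v = 0 := by
      have := h hv
      simpa using this
    rw [hv']
    simpa using mul_nonneg zero_le_one (quad_nonneg hx v)
  · -- there is a unit vector in Kᗮ
    have hKbot : Kᗮ ≠ ⊥ := fun hbot => hKtop (Submodule.orthogonal_eq_bot_iff.mp hbot)
    obtain ⟨v₀, hv₀K, hv₀⟩ := Submodule.exists_mem_ne_zero_of_ne_bot hKbot
    have hTcont : Continuous T := T.continuous_of_finiteDimensional
    have hTz : Continuous (Matrix.toEuclideanLin z : E →ₗ[ℝ] E) :=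
      (Matrix.toEuclideanLin z : E →ₗ[ℝ] E).continuous_of_finiteDimensional
    set f : E → ℝ := fun v => ⟪v, T v⟫ with hf
    set g : E → ℝ := fun v => ⟪v, Matrix.toEuclideanLin z v⟫ with hg
    have hfc : Continuous f := continuous_id.inner hTcont
    have hgc : Continuous g := continuous_id.inner hTz
    set u₀ : E := ‖v₀‖⁻¹ • v₀ with hu₀
    have hu₀norm : ‖u₀‖ = 1 := by
      rw [hu₀, norm_smul, norm_inv, norm_norm]
      field_simp [norm_ne_zero_iff.mpr hv₀]
    -- minimum of f on sphere ∩ Kᗮ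
    set S : Set E := Metric.sphere 0 1 ∩ (Kᗮ : Set E) with hS
    have hScpt : IsCompact S :=
      (isCompact_sphere 0 1).inter_right (Kᗮ.closed_of_finiteDimensional)
    have hSne : S.Nonempty := by
      refine ⟨u₀, ?_, Kᗮ.smul_mem _ hv₀K⟩
      simpa [mem_sphere_iff_norm] using hu₀norm
    obtain ⟨a, haS, ha⟩ := hScpt.exists_isMinOn hSne hfc.continuousOn
    set lam : ℝ := f a with hlam
    have hlam_pos : 0 < lam := by
      have ha0 : a ≠ 0 := by
        intro h0
        have := haS.1
        rw [h0] at this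
        simp at this
      have haK : a ∉ K := by
        intro hmem
        have : a ∈ K ⊓ Kᗮ := ⟨hmem, haS.2⟩
        rw [Submodule.inf_orthogonal_eq_bot] at this
        exact ha0 (by simpa using this)
      have hTa : T a ≠ 0 := haK
      have hxa : x *ᵥ (e a) ≠ 0 := by
        intro hcon
        exact haK ((mem_kerE_iff x a).mpr (by simpa [LinearMap.mem_ker] using hcon))
      have h1 : f a = (e a) ⬝ᵥ x *ᵥ (e a) := inner_toEuclideanLin x a
      have h2 : (e a) ⬝ᵥ x *ᵥ (e a) ≠ 0 := fun hcon => hxa ((mulVec_eq_zero_iff' hx _).mpr hcon)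
      have h3 : 0 ≤ (e a) ⬝ᵥ x *ᵥ (e a) := quad_nonneg hx _
      rw [hlam, h1]
      exact lt_of_le_of_ne h3 (Ne.symm h2)
    -- maximum of g on the unit sphere
    have hsphne : (Metric.sphere (0:E) 1).Nonempty := by
      refine ⟨u₀, by simpa [mem_sphere_iff_norm] using hu₀norm⟩
    obtain ⟨b, hbS, hb⟩ := (isCompact_sphere (0:E) 1).exists_isMaxOn hsphne hgc.continuousOn
    set M : ℝ := g b with hM
    have hM0 : 0 ≤ M := by
      rw [hM]
      show (0:ℝ) ≤ inner ℝ b (Matrix.toEuclideanLin z b)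
      rw [inner_toEuclideanLin]
      exact quad_nonneg hz _
    -- homogeneity bounds
    have hfquad : ∀ (t : ℝ) (w : E), f (t • w) = t^2 * f w := by
      intro t w
      simp only [hf, _root_.map_smul, real_inner_smul_left, real_inner_smul_right]
      ring
    have hgquad : ∀ (t : ℝ) (w : E), g (t • w) = t^2 * g w := by
      intro t w
      simp only [hg, _root_.map_smul, real_inner_smul_left, real_inner_smul_right]
      ring
    have hlow : ∀ w ∈ Kᗮ, lam * ‖w‖^2 ≤ f w := by
      intro w hw
      rcases eq_or_ne w 0 with rfl | hw0
      · simp [hf]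
      · have hnw : ‖w‖ ≠ 0 := norm_ne_zero_iff.mpr hw0
        have hmem : (‖w‖⁻¹ • w) ∈ S := by
          constructor
          · simp [mem_sphere_iff_norm, norm_smul, inv_mul_cancel₀ hnw]
          · exact Kᗮ.smul_mem _ hw
        have h1 : lam ≤ f (‖w‖⁻¹ • w) := ha hmem
        rw [hfquad] at h1
        have h2 : lam ≤ ‖w‖⁻¹^2 * f w := h1
        have h3 : lam * ‖w‖^2 ≤ (‖w‖⁻¹^2 * f w) * ‖w‖^2 :=
          mul_le_mul_of_nonneg_right h2 (sq_nonneg _)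
        calc lam * ‖w‖^2 ≤ (‖w‖⁻¹^2 * f w) * ‖w‖^2 := h3
          _ = f w := by field_simp
    have hhigh : ∀ w : E, g w ≤ M * ‖w‖^2 := by
      intro w
      rcases eq_or_ne w 0 with rfl | hw0
      · simp [hg]
      · have hnw : ‖w‖ ≠ 0 := norm_ne_zero_iff.mpr hw0
        have hmem : (‖w‖⁻¹ • w) ∈ Metric.sphere (0:E) 1 := by
          simp [mem_sphere_iff_norm, norm_smul, inv_mul_cancel₀ hnw]
        have h1 : g (‖w‖⁻¹ • w) ≤ M := hb hmem
        rw [hgquad] at h1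
        have h2 : ‖w‖⁻¹^2 * g w ≤ M := h1
        have h3 : (‖w‖⁻¹^2 * g w) * ‖w‖^2 ≤ M * ‖w‖^2 :=
          mul_le_mul_of_nonneg_right h2 (sq_nonneg _)
        calc g w = (‖w‖⁻¹^2 * g w) * ‖w‖^2 := by field_simp
          _ ≤ M * ‖w‖^2 := h3
    -- conclusion
    refine ⟨(M + 1) / lam, by positivity, fun v => ?_⟩
    set u : E := (e).symm v with hu
    obtain ⟨p, hp, q, hq, hpq⟩ := K.exists_add_mem_mem_orthogonal u
    have hveq : v = e p + e q := by
      have := congrArg (e) hpq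
      simp [hu] at this; exact this
    -- x and z kill p
    have hxp : x *ᵥ (e p) = 0 := by
      have := (mem_kerE_iff x p).mp hp
      simpa using this
    have hzp : z *ᵥ (e p) = 0 := by
      have := h ((mem_kerE_iff x p).mp hp)
      simpa using this
    have hzv : v ⬝ᵥ z *ᵥ v = (e q) ⬝ᵥ z *ᵥ (e q) := by
      rw [hveq]
      rw [mulVec_add, add_dotProduct, dotProduct_add, dotProduct_add, hzp]
      rw [dot_symm hz.1 (e p) (e q), hzp]
      simp
    have hxv : v ⬝ᵥ x *ᵥ v = (e q) ⬝ᵥ x *ᵥ (e q) := by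
      rw [hveq]
      rw [mulVec_add, add_dotProduct, dotProduct_add, dotProduct_add, hxp]
      rw [dot_symm hx.1 (e p) (e q), hxp]
      simp
    have hfq : f q = (e q) ⬝ᵥ x *ᵥ (e q) := inner_toEuclideanLin x q
    have hgq : g q = (e q) ⬝ᵥ z *ᵥ (e q) := inner_toEuclideanLin z q
    rw [hzv, hxv, ← hfq, ← hgq]
    have h1 : g q ≤ M * ‖q‖^2 := hhigh q
    have h2 : lam * ‖q‖^2 ≤ f q := hlow q hq
    have hlamne : lam ≠ 0 := ne_of_gt hlam_pos
    have h3 : M * ‖q‖^2 ≤ (M+1)/lam * (lam * ‖q‖^2) := by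
      have heq : (M+1)/lam * (lam * ‖q‖^2) = (M+1) * ‖q‖^2 := by
        field_simp
      rw [heq]
      nlinarith [sq_nonneg ‖q‖]
    calc g q ≤ M * ‖q‖^2 := h1
      _ ≤ (M+1)/lam * (lam * ‖q‖^2) := h3
      _ ≤ (M+1)/lam * f q := by
          apply mul_le_mul_of_nonneg_left h2
          positivity

lemma herm_smul {z : Matrix (Fin n) (Fin n) ℝ} (hz : z.IsHermitian) (c : ℝ) :
    (c • z).IsHermitian := by
  rw [Matrix.IsHermitian, conjTranspose_smul, hz.eq]
  simp

lemma exists_pos_sub_psd {x z : Matrix (Fin n) (Fin n) ℝ} (hx : x.PosSemidef)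
    (hz : z.PosSemidef) (h : LinearMap.ker x.mulVecLin ≤ LinearMap.ker z.mulVecLin) :
    ∃ ε : ℝ, 0 < ε ∧ (x - ε • z).PosSemidef := by
  obtain ⟨c, hc, hb⟩ := exists_bound hx hz h
  refine ⟨c⁻¹, inv_pos.mpr hc, .of_dotProduct_mulVec_nonneg (hx.1.sub (herm_smul hz.1 c⁻¹)) fun v => ?_⟩
  have hsv : star v = v := by simp
  rw [hsv, sub_mulVec, dotProduct_sub, smul_mulVec, dotProduct_smul]
  have h1 := hb v
  have h2 : c⁻¹ * (v ⬝ᵥ z *ᵥ v) ≤ c⁻¹ * (c * (v ⬝ᵥ x *ᵥ v)) :=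
    mul_le_mul_of_nonneg_left h1 (le_of_lt (inv_pos.mpr hc))
  have h3 : c⁻¹ * (c * (v ⬝ᵥ x *ᵥ v)) = v ⬝ᵥ x *ᵥ v := by
    field_simp
  simp only [smul_eq_mul]
  linarith [h2, h3]

lemma ker_le_of_sum {x y z : Matrix (Fin n) (Fin n) ℝ} (hy : y.PosSemidef) (hz : z.PosSemidef)
    (hsum : x = y + z) :
    LinearMap.ker x.mulVecLin ≤ LinearMap.ker y.mulVecLin := by
  intro v hv
  rw [LinearMap.mem_ker, mulVecLin_apply] at hv ⊢
  have h0 : v ⬝ᵥ x *ᵥ v = 0 := by rw [hv]; simp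
  rw [hsum, add_mulVec, dotProduct_add] at h0
  have hy' := quad_nonneg hy v
  have hz' := quad_nonneg hz v
  have : v ⬝ᵥ y *ᵥ v = 0 := by linarith
  exact (mulVec_eq_zero_iff' hy v).mpr this

lemma mulVecLin_smul' (c : ℝ) (x : Matrix (Fin n) (Fin n) ℝ) :
    (c • x).mulVecLin = c • x.mulVecLin := by
  ext v
  simp [mulVecLin_apply, smul_mulVec]

lemma exists_quad_pos {y : Matrix (Fin n) (Fin n) ℝ} (hy : y.PosSemidef) (hy0 : y ≠ 0) :
    ∃ v : Fin n → ℝ, 0 < v ⬝ᵥ y *ᵥ v := by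
  by_contra hcon
  push_neg at hcon
  apply hy0
  ext i j
  have hv : ∀ v, y *ᵥ v = 0 := by
    intro v
    refine (mulVec_eq_zero_iff' hy v).mpr (le_antisymm (hcon v) (quad_nonneg hy v))
  have := congrFun (hv (Pi.single j 1)) i
  simpa using this


end Helpers

/-- A nonzero element `x` of a linear spectrahedron
`C = {X ∈ L : X positive semi-definite}` (where `L` is a linear subspace of the symmetric
`n × n` real matrices) is extremal in `C` if and only if for every `z ∈ C`, the proper
inclusion `ker x ⊊ ker z` implies `z = 0`. -/
theorem stmt1 (n : ℕ) (L : Submodule ℝ (Matrix (Fin n) (Fin n) ℝ))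
    (hL : ∀ X ∈ L, X.IsSymm)
    (x : Matrix (Fin n) (Fin n) ℝ)
    (hxL : x ∈ L) (hxpsd : x.PosSemidef) (hx0 : x ≠ 0) :
    IsExtremalIn {X : Matrix (Fin n) (Fin n) ℝ | X ∈ L ∧ X.PosSemidef} x ↔
      ∀ z : Matrix (Fin n) (Fin n) ℝ, z ∈ L → z.PosSemidef →
        LinearMap.ker x.mulVecLin < LinearMap.ker z.mulVecLin → z = 0 := by
  constructor
  · rintro ⟨hxC, hx0', hext⟩ z hzL hzpsd hlt
    obtain ⟨ε, hε, hpsd⟩ := exists_pos_sub_psd hxpsd hzpsd hlt.le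
    have hεz : (ε • z).PosSemidef := by
      refine .of_dotProduct_mulVec_nonneg (herm_smul hzpsd.1 ε) fun v => ?_
      rw [smul_mulVec, dotProduct_smul]
      exact smul_nonneg hε.le (hzpsd.dotProduct_mulVec_nonneg v)
    have hmem1 : x - ε • z ∈ {X : Matrix (Fin n) (Fin n) ℝ | X ∈ L ∧ X.PosSemidef} :=
      ⟨sub_mem hxL (L.smul_mem ε hzL), hpsd⟩
    have hmem2 : ε • z ∈ {X : Matrix (Fin n) (Fin n) ℝ | X ∈ L ∧ X.PosSemidef} :=
      ⟨L.smul_mem ε hzL, hεz⟩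
    have hdecomp : x = (x - ε • z) + ε • z := by abel
    obtain ⟨-, b, hb0, hbz⟩ := hext _ hmem1 _ hmem2 hdecomp
    by_cases hb : b = 0
    · subst hb
      rw [zero_smul] at hbz
      rcases smul_eq_zero.mp hbz with h | h
      · exact absurd h (ne_of_gt hε)
      · exact h
    · exfalso
      have hzeq : z = (ε⁻¹ * b) • x := by
        have : ε⁻¹ • (ε • z) = ε⁻¹ • (b • x) := by rw [hbz]
        rw [smul_smul, smul_smul, inv_mul_cancel₀ (ne_of_gt hε), one_smul] at this
        exact this
      have hcb : ε⁻¹ * b ≠ 0 := mul_ne_zero (inv_ne_zero (ne_of_gt hε)) hb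
      have hker : LinearMap.ker z.mulVecLin = LinearMap.ker x.mulVecLin := by
        rw [hzeq, mulVecLin_smul', LinearMap.ker_smul _ _ hcb]
      rw [hker] at hlt
      exact lt_irrefl _ hlt
  · intro hcond
    refine ⟨⟨hxL, hxpsd⟩, hx0, ?_⟩
    have key : ∀ y z : Matrix (Fin n) (Fin n) ℝ, y ∈ L → y.PosSemidef → z.PosSemidef →
        x = y + z → ∃ a : ℝ, 0 ≤ a ∧ a ≤ 1 ∧ y = a • x := by
      intro y z hyL hypsd hzpsd hsum
      by_cases hy0 : y = 0
      · exact ⟨0, le_refl 0, zero_le_one, by simp [hy0]⟩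
      obtain ⟨v, hvy⟩ := exists_quad_pos hypsd hy0
      set S : Set ℝ := {t : ℝ | (x - t • y).PosSemidef} with hSdef
      have h1S : (1:ℝ) ∈ S := by
        show (x - (1:ℝ) • y).PosSemidef
        rw [one_smul, hsum]
        simpa using hzpsd
      have hSne : S.Nonempty := ⟨1, h1S⟩
      have hbdd : BddAbove S := by
        refine ⟨(v ⬝ᵥ x *ᵥ v) / (v ⬝ᵥ y *ᵥ v), fun t ht => ?_⟩
        have h2 := quad_nonneg ht v
        rw [sub_mulVec, dotProduct_sub, smul_mulVec, dotProduct_smul, smul_eq_mul] at h2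
        rw [le_div_iff₀ hvy]
        linarith
      set t₀ : ℝ := sSup S with ht₀
      have ht1 : (1:ℝ) ≤ t₀ := le_csSup hbdd h1S
      have ht₀cl : t₀ ∈ closure S := (isLUB_csSup hSne hbdd).mem_closure hSne
      have hppsd : (x - t₀ • y).PosSemidef := by
        refine .of_dotProduct_mulVec_nonneg (hxpsd.1.sub (herm_smul hypsd.1 t₀)) fun w => ?_
        have hsub : S ⊆ {t : ℝ | 0 ≤ w ⬝ᵥ x *ᵥ w - t * (w ⬝ᵥ y *ᵥ w)} := by
          intro t ht
          have h2 := quad_nonneg ht w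
          rw [sub_mulVec, dotProduct_sub, smul_mulVec, dotProduct_smul, smul_eq_mul] at h2
          simpa using h2
        have hcl : IsClosed {t : ℝ | 0 ≤ w ⬝ᵥ x *ᵥ w - t * (w ⬝ᵥ y *ᵥ w)} :=
          isClosed_le continuous_const (continuous_const.sub (continuous_id.mul continuous_const))
        have ht₀mem := (closure_minimal hsub hcl) ht₀cl
        have : 0 ≤ w ⬝ᵥ x *ᵥ w - t₀ * (w ⬝ᵥ y *ᵥ w) := ht₀mem
        have hsw : star w = w := by simp
        rw [hsw, sub_mulVec, dotProduct_sub, smul_mulVec, dotProduct_smul, smul_eq_mul]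
        linarith
      have hkerle : LinearMap.ker x.mulVecLin ≤ LinearMap.ker (x - t₀ • y).mulVecLin := by
        intro u hu
        have hyu := ker_le_of_sum hypsd hzpsd hsum hu
        rw [LinearMap.mem_ker, mulVecLin_apply] at hu hyu ⊢
        rw [sub_mulVec, smul_mulVec, hu, hyu]
        simp
      by_cases hkeq : LinearMap.ker (x - t₀ • y).mulVecLin = LinearMap.ker x.mulVecLin
      · exfalso
        have hkery : LinearMap.ker (x - t₀ • y).mulVecLin ≤ LinearMap.ker y.mulVecLin := by
          rw [hkeq]
          exact ker_le_of_sum hypsd hzpsd hsum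
        obtain ⟨ε, hε, hpε⟩ := exists_pos_sub_psd hppsd hypsd hkery
        have heq : x - t₀ • y - ε • y = x - (t₀ + ε) • y := by
          rw [add_smul]; abel
        rw [heq] at hpε
        have : t₀ + ε ∈ S := hpε
        have := le_csSup hbdd this
        linarith
      · have hlt : LinearMap.ker x.mulVecLin < LinearMap.ker (x - t₀ • y).mulVecLin :=
          lt_of_le_of_ne hkerle (Ne.symm hkeq)
        have hpL : x - t₀ • y ∈ L := sub_mem hxL (L.smul_mem _ hyL)
        have hp0 : x - t₀ • y = 0 := hcond _ hpL hppsd hlt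
        have hxy : x = t₀ • y := by
          have := sub_eq_zero.mp hp0
          exact this
        have ht0 : (0:ℝ) < t₀ := lt_of_lt_of_le one_pos ht1
        refine ⟨t₀⁻¹, (inv_pos.mpr ht0).le, inv_le_one_of_one_le₀ ht1, ?_⟩
        rw [hxy, smul_smul, inv_mul_cancel₀ (ne_of_gt ht0), one_smul]
    rintro y ⟨hyL, hypsd⟩ z ⟨hzL, hzpsd⟩ hsum
    obtain ⟨a, ha0, ha1, hya⟩ := key y z hyL hypsd hzpsd hsum
    refine ⟨⟨a, ha0, hya⟩, ⟨1 - a, by linarith, ?_⟩⟩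
    have hz : z = x - y := by rw [hsum]; abel
    rw [hz, hya, sub_smul, one_smul]
end

section
/- Let V be a 2-dimensional real vector space. Then every linear subspace U ⊆ Sym²V with dim U ≥ 2 contains a nonzero element of the form u∨v for some u, v ∈ V. -/
open TensorProduct

noncomputable section

/-- The space of bilinear forms on `V ⊗ V`, in which quadrilinear forms on `V` live. -/
abbrev QF (V : Type*) [AddCommGroup V] [Module ℝ V] :=
  (V ⊗[ℝ] V) →ₗ[ℝ] (V ⊗[ℝ] V) →ₗ[ℝ] ℝ

variable {V : Type*} [AddCommGroup V] [Module ℝ V]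

/-- Membership in the space `W` of quadrilinear forms with the symmetries
(i) pair exchange, (ii) `τ`-invariance, (iii) `Sym²V ⟂ Λ²V`. -/
def MemW (S : QF V) : Prop :=
  (∀ v₁ v₂ v₃ v₄ : V,
      S (v₁ ⊗ₜ[ℝ] v₂) (v₃ ⊗ₜ[ℝ] v₄) = S (v₃ ⊗ₜ[ℝ] v₄) (v₁ ⊗ₜ[ℝ] v₂)) ∧
  (∀ v₁ v₂ v₃ v₄ : V,
      S (v₁ ⊗ₜ[ℝ] v₂) (v₃ ⊗ₜ[ℝ] v₄) = S (v₁ ⊗ₜ[ℝ] v₄) (v₃ ⊗ₜ[ℝ] v₂)) ∧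
  (∀ v₁ v₂ v₃ v₄ : V,
      S (v₁ ⊗ₜ[ℝ] v₂ + v₂ ⊗ₜ[ℝ] v₁) (v₃ ⊗ₜ[ℝ] v₄ - v₄ ⊗ₜ[ℝ] v₃) = 0)

/-- Membership in the cone `C_W = {S ∈ W : S ≥ 0}`. -/
def MemCW (S : QF V) : Prop := MemW S ∧ ∀ Q : V ⊗[ℝ] V, 0 ≤ S Q Q

/-- `S` generates an extremal ray of the cone `C_W`. -/
def IsExtremalCW (S : QF V) : Prop :=
  MemCW S ∧ S ≠ 0 ∧ ∀ S₀ S₁ : QF V, MemCW S₀ → MemCW S₁ → S = S₀ + S₁ →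
    (∃ a : ℝ, 0 ≤ a ∧ S₀ = a • S) ∧ (∃ b : ℝ, 0 ≤ b ∧ S₁ = b • S)

/-- The subspace `Sym²V ⊆ V ⊗ V` of symmetric 2-tensors. -/
def Sym2T (V : Type*) [AddCommGroup V] [Module ℝ V] : Submodule ℝ (V ⊗[ℝ] V) :=
  Submodule.span ℝ {x : V ⊗[ℝ] V | ∃ u v : V, x = u ⊗ₜ[ℝ] v + v ⊗ₜ[ℝ] u}

/-- The subspace `Λ²V ⊆ V ⊗ V` of antisymmetric 2-tensors. -/
def Alt2T (V : Type*) [AddCommGroup V] [Module ℝ V] : Submodule ℝ (V ⊗[ℝ] V) :=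
  Submodule.span ℝ {x : V ⊗[ℝ] V | ∃ u v : V, x = u ⊗ₜ[ℝ] v - v ⊗ₜ[ℝ] u}

/-- If `V` is a 2-dimensional real vector space, then every linear subspace
`U ⊆ Sym²V` with `dim U ≥ 2` contains a nonzero element of the form `u ∨ v`. -/
theorem stmt2 {V : Type*} [AddCommGroup V] [Module ℝ V] [FiniteDimensional ℝ V]
    (hV : Module.finrank ℝ V = 2)
    (U : Submodule ℝ (V ⊗[ℝ] V)) (hU : U ≤ Sym2T V)
    (hdU : 2 ≤ Module.finrank ℝ U) :
    ∃ u v : V, (1 / 2 : ℝ) • (u ⊗ₜ[ℝ] v + v ⊗ₜ[ℝ] u) ∈ U ∧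
      (1 / 2 : ℝ) • (u ⊗ₜ[ℝ] v + v ⊗ₜ[ℝ] u) ≠ 0 := by
    classical
  let b : Module.Basis (Fin 2) ℝ V := Module.finBasisOfFinrankEq ℝ V hV
  let B : Module.Basis (Fin 2 × Fin 2) ℝ (V ⊗[ℝ] V) := b.tensorProduct b
  let f : U →ₗ[ℝ] ℝ := (B.coord (0, 0)).comp U.subtype
  have hker : 0 < Module.finrank ℝ (LinearMap.ker f) := by
    have h1 := LinearMap.finrank_range_add_finrank_ker f
    have h2 : Module.finrank ℝ (LinearMap.range f) ≤ 1 := by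
      calc Module.finrank ℝ (LinearMap.range f) ≤ Module.finrank ℝ ℝ :=
            Submodule.finrank_le _
        _ = 1 := Module.finrank_self ℝ
    omega
  have : Nontrivial (LinearMap.ker f) := Module.nontrivial_of_finrank_pos hker
  obtain ⟨t, ht⟩ := exists_ne (0 : LinearMap.ker f)
  set x : V ⊗[ℝ] V := ((t : U) : V ⊗[ℝ] V) with hxdef
  have hxU : x ∈ U := (t : U).2
  have hx0 : x ≠ 0 := by
    intro h
    apply ht
    ext
    exact h
  have hf : B.repr x (0, 0) = 0 := t.2
  have hsym : ∀ y ∈ Sym2T V, B.repr y (0, 1) = B.repr y (1, 0) := by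
    intro y hy
    induction hy using Submodule.span_induction with
    | mem z hz =>
      obtain ⟨u, v, rfl⟩ := hz
      simp only [map_add, Finsupp.add_apply, Module.Basis.tensorProduct_repr_tmul_apply,
        smul_eq_mul, B]
      ring
    | zero => simp
    | add z w _ _ hz hw => simp [map_add, hz, hw]
    | smul r z _ hz => simp [map_smul, hz]
  have hβ : B.repr x (0, 1) = B.repr x (1, 0) := hsym x (hU hxU)
  set β := B.repr x (0, 1) with hβdef
  set γ := B.repr x (1, 1) with hγdef
  have hx : (1 / 2 : ℝ) • (b 1 ⊗ₜ[ℝ] ((2 * β) • b 0 + γ • b 1)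
      + ((2 * β) • b 0 + γ • b 1) ⊗ₜ[ℝ] b 1) = x := by
    apply B.ext_elem
    rintro ⟨i, j⟩
    simp only [map_smul, map_add, Finsupp.smul_apply, Finsupp.add_apply,
      tmul_add, add_tmul, tmul_smul, smul_tmul', Module.Basis.tensorProduct_repr_tmul_apply,
      Module.Basis.repr_self, smul_eq_mul, B]
    fin_cases i <;> fin_cases j <;> simp only [Finsupp.single_apply] <;> norm_num
    · show (0:ℝ) = B.repr x (0, 0); rw [hf]
    · show 1 / 2 * (2 * β) = B.repr x (0, 1); rw [← hβdef]; ring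
    · show 1 / 2 * (2 * β) = B.repr x (1, 0); rw [← hβ]; ring
    · show 1 / 2 * (γ + γ) = B.repr x (1, 1); rw [← hγdef]; ring
  exact ⟨b 1, (2 * β) • b 0 + γ • b 1, hx ▸ hxU, hx ▸ hx0⟩
end
end

section
/- The restriction map R : W → Sym²(Sym²V*), sending a quadrilinear form S ∈ W to the restriction of the associated bilinear form on V⊗V to the subspace Sym²V of symmetric 2-tensors, is a linear isomorphism, and it restricts to the identity map on the subspace Sym⁴V* ⊆ W of totally symmetric quadrilinear forms. -/
open TensorProduct

noncomputable section

variable {V : Type*} [AddCommGroup V] [Module ℝ V]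

/-- `S` is a totally symmetric quadrilinear form (i.e. `S ∈ Sym⁴V*`). -/
def IsTotSym (S : QF V) : Prop := ∀ v₁ v₂ v₃ v₄ : V,
  S (v₁ ⊗ₜ[ℝ] v₂) (v₃ ⊗ₜ[ℝ] v₄) = S (v₂ ⊗ₜ[ℝ] v₁) (v₃ ⊗ₜ[ℝ] v₄) ∧
  S (v₁ ⊗ₜ[ℝ] v₂) (v₃ ⊗ₜ[ℝ] v₄) = S (v₁ ⊗ₜ[ℝ] v₃) (v₂ ⊗ₜ[ℝ] v₄) ∧
  S (v₁ ⊗ₜ[ℝ] v₂) (v₃ ⊗ₜ[ℝ] v₄) = S (v₁ ⊗ₜ[ℝ] v₂) (v₄ ⊗ₜ[ℝ] v₃)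

/-! ### Auxiliary constructions for the proof -/

/-- The bilinear symmetrization `u, v ↦ u ⊗ v + v ⊗ u`. -/
noncomputable def symBil (V : Type*) [AddCommGroup V] [Module ℝ V] :
    V →ₗ[ℝ] V →ₗ[ℝ] V ⊗[ℝ] V :=
  LinearMap.mk₂ ℝ (fun u v => u ⊗ₜ[ℝ] v + v ⊗ₜ[ℝ] u)
    (fun u u' v => by simp [TensorProduct.add_tmul, TensorProduct.tmul_add]; abel)
    (fun r u v => by simp [TensorProduct.smul_tmul', TensorProduct.tmul_smul, smul_add])
    (fun u v v' => by simp [TensorProduct.add_tmul, TensorProduct.tmul_add]; abel)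
    (fun r u v => by simp [TensorProduct.smul_tmul', TensorProduct.tmul_smul, smul_add])

/-- Symmetrization `V ⊗ V → V ⊗ V`. -/
noncomputable def symAmb (V : Type*) [AddCommGroup V] [Module ℝ V] :
    V ⊗[ℝ] V →ₗ[ℝ] V ⊗[ℝ] V :=
  TensorProduct.lift (symBil V)

@[simp] lemma symAmb_tmul (u v : V) :
    symAmb V (u ⊗ₜ[ℝ] v) = u ⊗ₜ[ℝ] v + v ⊗ₜ[ℝ] u := rfl

lemma symAmb_mem (x : V ⊗[ℝ] V) : symAmb V x ∈ Sym2T V := by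
  induction x using TensorProduct.induction_on with
  | zero => simp
  | tmul u v => exact Submodule.subset_span ⟨u, v, rfl⟩
  | add x y hx hy => rw [map_add]; exact (Sym2T V).add_mem hx hy

/-- Symmetrization, with values in `Sym²V`. -/
noncomputable def sMap (V : Type*) [AddCommGroup V] [Module ℝ V] :
    V ⊗[ℝ] V →ₗ[ℝ] ↥(Sym2T V) :=
  (symAmb V).codRestrict (Sym2T V) symAmb_mem

@[simp] lemma sMap_coe (x : V ⊗[ℝ] V) : (sMap V x : V ⊗[ℝ] V) = symAmb V x := rfl

lemma sMap_comm (u v : V) : sMap V (u ⊗ₜ[ℝ] v) = sMap V (v ⊗ₜ[ℝ] u) :=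
  Subtype.ext (by simp [add_comm])

/-- The element of `W` built from a symmetric bilinear form on `Sym²V`. -/
noncomputable def buildS (bb : ↥(Sym2T V) →ₗ[ℝ] ↥(Sym2T V) →ₗ[ℝ] ℝ) : QF V :=
  (4⁻¹ : ℝ) • (bb.compl₁₂ (sMap V) (sMap V)
    - TensorProduct.curry ((TensorProduct.lift (bb.compl₁₂ (sMap V) (sMap V))) ∘ₗ
        (TensorProduct.tensorTensorTensorComm ℝ V V V V).toLinearMap)
    + (TensorProduct.curry ((TensorProduct.lift (bb.compl₁₂ (sMap V) (sMap V))) ∘ₗ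
        (TensorProduct.tensorTensorTensorComm ℝ V V V V).toLinearMap)).compl₂
        (TensorProduct.comm ℝ V V).toLinearMap)

lemma buildS_tmul (bb : ↥(Sym2T V) →ₗ[ℝ] ↥(Sym2T V) →ₗ[ℝ] ℝ) (a b c d : V) :
    buildS bb (a ⊗ₜ[ℝ] b) (c ⊗ₜ[ℝ] d) =
      4⁻¹ * (bb (sMap V (a ⊗ₜ[ℝ] b)) (sMap V (c ⊗ₜ[ℝ] d))
        - bb (sMap V (a ⊗ₜ[ℝ] c)) (sMap V (b ⊗ₜ[ℝ] d))
        + bb (sMap V (a ⊗ₜ[ℝ] d)) (sMap V (b ⊗ₜ[ℝ] c))) := by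
  simp [buildS, TensorProduct.curry_apply, TensorProduct.tensorTensorTensorComm_tmul,
    TensorProduct.comm_tmul, smul_eq_mul]
  ring

/-- Part (1): totally symmetric forms lie in `W`. -/
lemma totSym_memW (S : QF V) (hS : IsTotSym S) : MemW S := by
  have h12 : ∀ a b c d : V, S (a ⊗ₜ[ℝ] b) (c ⊗ₜ[ℝ] d) = S (b ⊗ₜ[ℝ] a) (c ⊗ₜ[ℝ] d) :=
    fun a b c d => (hS a b c d).1
  have h23 : ∀ a b c d : V, S (a ⊗ₜ[ℝ] b) (c ⊗ₜ[ℝ] d) = S (a ⊗ₜ[ℝ] c) (b ⊗ₜ[ℝ] d) :=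
    fun a b c d => (hS a b c d).2.1
  have h34 : ∀ a b c d : V, S (a ⊗ₜ[ℝ] b) (c ⊗ₜ[ℝ] d) = S (a ⊗ₜ[ℝ] b) (d ⊗ₜ[ℝ] c) :=
    fun a b c d => (hS a b c d).2.2
  refine ⟨fun a b c d => ?_, fun a b c d => ?_, fun a b c d => ?_⟩
  · calc S (a ⊗ₜ[ℝ] b) (c ⊗ₜ[ℝ] d) = S (a ⊗ₜ[ℝ] c) (b ⊗ₜ[ℝ] d) := h23 a b c d
      _ = S (c ⊗ₜ[ℝ] a) (b ⊗ₜ[ℝ] d) := h12 a c b d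
      _ = S (c ⊗ₜ[ℝ] b) (a ⊗ₜ[ℝ] d) := h23 c a b d
      _ = S (c ⊗ₜ[ℝ] b) (d ⊗ₜ[ℝ] a) := h34 c b a d
      _ = S (c ⊗ₜ[ℝ] d) (b ⊗ₜ[ℝ] a) := h23 c b d a
      _ = S (c ⊗ₜ[ℝ] d) (a ⊗ₜ[ℝ] b) := h34 c d b a
  · calc S (a ⊗ₜ[ℝ] b) (c ⊗ₜ[ℝ] d) = S (a ⊗ₜ[ℝ] b) (d ⊗ₜ[ℝ] c) := h34 a b c d
      _ = S (a ⊗ₜ[ℝ] d) (b ⊗ₜ[ℝ] c) := h23 a b d c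
      _ = S (a ⊗ₜ[ℝ] d) (c ⊗ₜ[ℝ] b) := h34 a d b c
  · simp only [map_add, map_sub, LinearMap.add_apply, LinearMap.sub_apply]
    linarith [h12 a b c d, h12 a b d c, h34 a b c d, h34 b a c d]

/-- The restriction map `R : W → Sym²(Sym²V*)` is a linear isomorphism restricting to the
identity on `Sym⁴V*`.  Concretely: (1) `Sym⁴V* ⊆ W`; (2) `R` is injective on `W`:
elements of `W` agreeing on `Sym²V` are equal; (3) `R` is surjective: every symmetric
bilinear form on `Sym²V` is the restriction of some element of `W`; (4) for totally
symmetric `S`, the restriction is `S` itself: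
`S(v₁⊗v₂, v₃⊗v₄) = S(v₁∨v₂, v₃∨v₄)`. -/
theorem stmt3 {V : Type*} [AddCommGroup V] [Module ℝ V] [FiniteDimensional ℝ V] :
    (∀ S : QF V, IsTotSym S → MemW S) ∧
    (∀ S₁ S₂ : QF V, MemW S₁ → MemW S₂ →
      (∀ T ∈ Sym2T V, ∀ T' ∈ Sym2T V, S₁ T T' = S₂ T T') → S₁ = S₂) ∧
    (∀ b : ↥(Sym2T V) →ₗ[ℝ] ↥(Sym2T V) →ₗ[ℝ] ℝ, (∀ T T' : ↥(Sym2T V), b T T' = b T' T) →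
      ∃ S : QF V, MemW S ∧ ∀ T T' : ↥(Sym2T V), S T.1 T'.1 = b T T') ∧
    (∀ S : QF V, IsTotSym S → ∀ v₁ v₂ v₃ v₄ : V,
      S (v₁ ⊗ₜ[ℝ] v₂) (v₃ ⊗ₜ[ℝ] v₄) =
        S ((1 / 2 : ℝ) • (v₁ ⊗ₜ[ℝ] v₂ + v₂ ⊗ₜ[ℝ] v₁))
          ((1 / 2 : ℝ) • (v₃ ⊗ₜ[ℝ] v₄ + v₄ ⊗ₜ[ℝ] v₃))) := by
  refine ⟨totSym_memW, ?_, ?_, ?_⟩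
  · -- (2) injectivity
    intro S₁ S₂ h₁ h₂ hagree
    have hmem : ∀ u v : V, u ⊗ₜ[ℝ] v + v ⊗ₜ[ℝ] u ∈ Sym2T V :=
      fun u v => Submodule.subset_span ⟨u, v, rfl⟩
    -- the difference quadrilinear form
    set T : V → V → V → V → ℝ := fun a b c d =>
      S₁ (a ⊗ₜ[ℝ] b) (c ⊗ₜ[ℝ] d) - S₂ (a ⊗ₜ[ℝ] b) (c ⊗ₜ[ℝ] d) with hT
    have hpair : ∀ a b c d : V, T a b c d = T c d a b := by
      intro a b c d; simp only [hT]; rw [h₁.1 a b c d, h₂.1 a b c d]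
    have h2 : ∀ a b c d : V, T a b c d = T a d c b := by
      intro a b c d; simp only [hT]; rw [h₁.2.1 a b c d, h₂.2.1 a b c d]
    have hsym0 : ∀ a b c d : V, T a b c d + T b a c d + T a b d c + T b a d c = 0 := by
      intro a b c d
      have := hagree _ (hmem a b) _ (hmem c d)
      simp only [map_add, LinearMap.add_apply] at this
      simp only [hT]; linarith
    have hiii : ∀ a b c d : V, T a b c d + T b a c d - T a b d c - T b a d c = 0 := by
      intro a b c d
      have e₁ := h₁.2.2 a b c d
      have e₂ := h₂.2.2 a b c d
      simp only [map_add, map_sub, LinearMap.add_apply, LinearMap.sub_apply] at e₁ e₂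
      simp only [hT]; linarith
    have hanti : ∀ a b c d : V, T b a c d = -T a b c d := by
      intro a b c d; linarith [hsym0 a b c d, hiii a b c d]
    have hcyc : ∀ a b c d : V, T a b c d = -T c a b d := by
      intro a b c d
      calc T a b c d = -T b a c d := by linarith [hanti a b c d]
        _ = -T b d c a := by rw [h2 b a c d]
        _ = -T c a b d := by rw [hpair b d c a]
    have hzero : ∀ a b c d : V, T a b c d = 0 := by
      intro a b c d
      have e1 := hcyc a b c d
      have e2 := hcyc c a b d
      have e3 := hcyc b c a d
      linarith
    refine TensorProduct.ext' fun a b => TensorProduct.ext' fun c d => ?_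
    have := hzero a b c d
    simp only [hT] at this
    linarith
  · -- (3) surjectivity
    intro bb hb
    have hg1 : ∀ a b c d : V, bb (sMap V (a ⊗ₜ[ℝ] b)) (sMap V (c ⊗ₜ[ℝ] d))
        = bb (sMap V (b ⊗ₜ[ℝ] a)) (sMap V (c ⊗ₜ[ℝ] d)) := by
      intro a b c d; rw [sMap_comm a b]
    have hg2 : ∀ a b c d : V, bb (sMap V (a ⊗ₜ[ℝ] b)) (sMap V (c ⊗ₜ[ℝ] d))
        = bb (sMap V (a ⊗ₜ[ℝ] b)) (sMap V (d ⊗ₜ[ℝ] c)) := by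
      intro a b c d; rw [sMap_comm c d]
    have hgp : ∀ a b c d : V, bb (sMap V (a ⊗ₜ[ℝ] b)) (sMap V (c ⊗ₜ[ℝ] d))
        = bb (sMap V (c ⊗ₜ[ℝ] d)) (sMap V (a ⊗ₜ[ℝ] b)) := by
      intro a b c d; rw [hb]
    refine ⟨buildS bb, ⟨fun a b c d => ?_, fun a b c d => ?_, fun a b c d => ?_⟩, ?_⟩
    · -- pair symmetry
      rw [buildS_tmul, buildS_tmul]
      rw [← hgp a b c d]
      rw [show bb (sMap V (c ⊗ₜ[ℝ] a)) (sMap V (d ⊗ₜ[ℝ] b))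
            = bb (sMap V (a ⊗ₜ[ℝ] c)) (sMap V (b ⊗ₜ[ℝ] d)) by rw [hg1 c a d b, hg2 a c d b],
          show bb (sMap V (c ⊗ₜ[ℝ] b)) (sMap V (d ⊗ₜ[ℝ] a))
            = bb (sMap V (a ⊗ₜ[ℝ] d)) (sMap V (b ⊗ₜ[ℝ] c)) by
            rw [hg1 c b d a, hgp b c d a, hg1 d a b c]]
    · -- condition (ii)
      rw [buildS_tmul, buildS_tmul]
      rw [show bb (sMap V (a ⊗ₜ[ℝ] d)) (sMap V (c ⊗ₜ[ℝ] b))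
            = bb (sMap V (a ⊗ₜ[ℝ] d)) (sMap V (b ⊗ₜ[ℝ] c)) from hg2 a d c b,
          show bb (sMap V (a ⊗ₜ[ℝ] c)) (sMap V (d ⊗ₜ[ℝ] b))
            = bb (sMap V (a ⊗ₜ[ℝ] c)) (sMap V (b ⊗ₜ[ℝ] d)) from hg2 a c d b,
          show bb (sMap V (a ⊗ₜ[ℝ] b)) (sMap V (d ⊗ₜ[ℝ] c))
            = bb (sMap V (a ⊗ₜ[ℝ] b)) (sMap V (c ⊗ₜ[ℝ] d)) from hg2 a b d c]
      ring
    · -- condition (iii)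
      simp only [map_add, map_sub, LinearMap.add_apply, LinearMap.sub_apply]
      rw [buildS_tmul, buildS_tmul, buildS_tmul, buildS_tmul]
      have n1 : bb (sMap V (b ⊗ₜ[ℝ] a)) (sMap V (c ⊗ₜ[ℝ] d))
          = bb (sMap V (a ⊗ₜ[ℝ] b)) (sMap V (c ⊗ₜ[ℝ] d)) := (hg1 a b c d).symm
      have n2 : bb (sMap V (b ⊗ₜ[ℝ] c)) (sMap V (a ⊗ₜ[ℝ] d))
          = bb (sMap V (a ⊗ₜ[ℝ] d)) (sMap V (b ⊗ₜ[ℝ] c)) := (hgp b c a d)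
      have n3 : bb (sMap V (b ⊗ₜ[ℝ] d)) (sMap V (a ⊗ₜ[ℝ] c))
          = bb (sMap V (a ⊗ₜ[ℝ] c)) (sMap V (b ⊗ₜ[ℝ] d)) := (hgp b d a c)
      have n4 : bb (sMap V (a ⊗ₜ[ℝ] b)) (sMap V (d ⊗ₜ[ℝ] c))
          = bb (sMap V (a ⊗ₜ[ℝ] b)) (sMap V (c ⊗ₜ[ℝ] d)) := (hg2 a b c d).symm
      have n5 : bb (sMap V (b ⊗ₜ[ℝ] a)) (sMap V (d ⊗ₜ[ℝ] c))
          = bb (sMap V (a ⊗ₜ[ℝ] b)) (sMap V (c ⊗ₜ[ℝ] d)) := by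
        rw [← hg1 a b d c, ← hg2 a b c d]
      linarith [n1, n2, n3, n4, n5]
    · -- the restriction is `bb`
      have key : LinearMap.compl₁₂ (buildS bb) (Sym2T V).subtype (Sym2T V).subtype = bb := by
        have htop : Submodule.span ℝ
            (((↑) : ↥(Sym2T V) → V ⊗[ℝ] V) ⁻¹'
              {x : V ⊗[ℝ] V | ∃ u v : V, x = u ⊗ₜ[ℝ] v + v ⊗ₜ[ℝ] u}) = ⊤ :=
          Submodule.span_span_coe_preimage
        refine LinearMap.ext_on htop ?_
        intro x hx
        obtain ⟨u, v, huv⟩ := hx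
        refine LinearMap.ext_on htop ?_
        intro y hy
        obtain ⟨p, q, hpq⟩ := hy
        have hxs : x = sMap V (u ⊗ₜ[ℝ] v) := Subtype.ext (by simp [huv])
        have hys : y = sMap V (p ⊗ₜ[ℝ] q) := Subtype.ext (by simp [hpq])
        rw [hxs, hys]
        simp only [LinearMap.compl₁₂_apply, Submodule.coe_subtype, sMap_coe, symAmb_tmul]
        simp only [map_add, LinearMap.add_apply]
        rw [buildS_tmul, buildS_tmul, buildS_tmul, buildS_tmul]
        have n1 : bb (sMap V (v ⊗ₜ[ℝ] u)) (sMap V (p ⊗ₜ[ℝ] q))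
            = bb (sMap V (u ⊗ₜ[ℝ] v)) (sMap V (p ⊗ₜ[ℝ] q)) := (hg1 u v p q).symm
        have n2 : bb (sMap V (u ⊗ₜ[ℝ] v)) (sMap V (q ⊗ₜ[ℝ] p))
            = bb (sMap V (u ⊗ₜ[ℝ] v)) (sMap V (p ⊗ₜ[ℝ] q)) := (hg2 u v p q).symm
        have n3 : bb (sMap V (v ⊗ₜ[ℝ] u)) (sMap V (q ⊗ₜ[ℝ] p))
            = bb (sMap V (u ⊗ₜ[ℝ] v)) (sMap V (p ⊗ₜ[ℝ] q)) := by
          rw [← hg1 u v q p, ← hg2 u v p q]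
        have n4 : bb (sMap V (v ⊗ₜ[ℝ] p)) (sMap V (u ⊗ₜ[ℝ] q))
            = bb (sMap V (u ⊗ₜ[ℝ] q)) (sMap V (v ⊗ₜ[ℝ] p)) := hgp v p u q
        have n5 : bb (sMap V (v ⊗ₜ[ℝ] q)) (sMap V (u ⊗ₜ[ℝ] p))
            = bb (sMap V (u ⊗ₜ[ℝ] p)) (sMap V (v ⊗ₜ[ℝ] q)) := hgp v q u p
        linarith [n1, n2, n3, n4, n5]
      intro T T'
      have := DFunLike.congr_fun (DFunLike.congr_fun key T) T'
      simpa using this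
  · -- (4) restriction of a totally symmetric form
    intro S hS v₁ v₂ v₃ v₄
    have h12 := (hS v₁ v₂ v₃ v₄).1
    have h34 := (hS v₁ v₂ v₃ v₄).2.2
    have h34' := (hS v₂ v₁ v₃ v₄).2.2
    have h12' := (hS v₁ v₂ v₄ v₃).1
    simp only [map_smul, LinearMap.smul_apply, map_add, LinearMap.add_apply, smul_eq_mul]
    linarith
end
end

section
/- The restriction map R' : W → Sym²(Λ²V*), sending S ∈ W to the restriction of the associated bilinear form on V⊗V to the subspace Λ²V of antisymmetric 2-tensors, has kernel equal to Sym⁴V* and image equal to the space K(V) of algebraic curvature tensors, i.e. the space of A ∈ Sym²(Λ²V*) satisfying the first Bianchi identity A(v₁,v₂,v₃,v₄) + A(v₂,v₃,v₁,v₄) + A(v₃,v₁,v₂,v₄) = 0 for all vᵢ ∈ V. Consequently, R' restricts to a linear isomorphism from K_W onto K(V), where K_W ⊆ W is the kernel of the total symmetrization map tot : W → Sym⁴V*. -/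
open TensorProduct

noncomputable section

variable {V : Type*} [AddCommGroup V] [Module ℝ V]

/-- The total symmetrization of `S` vanishes, i.e. `S ∈ K_W = ker(tot)`. -/
def TotSymZero (S : QF V) : Prop := ∀ v : Fin 4 → V,
  ∑ σ : Equiv.Perm (Fin 4),
    S (v (σ 0) ⊗ₜ[ℝ] v (σ 1)) (v (σ 2) ⊗ₜ[ℝ] v (σ 3)) = 0

/-- `A` is an algebraic curvature tensor, i.e. `A ∈ K(V) ⊆ Sym²(Λ²V*)`: a quadrilinear
form antisymmetric in the first and last pairs of arguments, symmetric under exchange of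
the two pairs, and satisfying the first Bianchi identity. -/
def MemK (A : QF V) : Prop :=
  (∀ v₁ v₂ v₃ v₄ : V,
      A (v₁ ⊗ₜ[ℝ] v₂) (v₃ ⊗ₜ[ℝ] v₄) = - A (v₂ ⊗ₜ[ℝ] v₁) (v₃ ⊗ₜ[ℝ] v₄)) ∧
  (∀ v₁ v₂ v₃ v₄ : V,
      A (v₁ ⊗ₜ[ℝ] v₂) (v₃ ⊗ₜ[ℝ] v₄) = - A (v₁ ⊗ₜ[ℝ] v₂) (v₄ ⊗ₜ[ℝ] v₃)) ∧
  (∀ v₁ v₂ v₃ v₄ : V,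
      A (v₁ ⊗ₜ[ℝ] v₂) (v₃ ⊗ₜ[ℝ] v₄) = A (v₃ ⊗ₜ[ℝ] v₄) (v₁ ⊗ₜ[ℝ] v₂)) ∧
  (∀ v₁ v₂ v₃ v₄ : V,
      A (v₁ ⊗ₜ[ℝ] v₂) (v₃ ⊗ₜ[ℝ] v₄) + A (v₂ ⊗ₜ[ℝ] v₃) (v₁ ⊗ₜ[ℝ] v₄)
        + A (v₃ ⊗ₜ[ℝ] v₁) (v₂ ⊗ₜ[ℝ] v₄) = 0)

section AuxLemmas

variable {V : Type*} [AddCommGroup V] [Module ℝ V]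

/-- A bilinear form vanishing on pairs of generators vanishes on pairs from the spans. -/
lemma qf_vanish_span (B : QF V) {s t : Set (V ⊗[ℝ] V)}
    (h : ∀ x ∈ s, ∀ y ∈ t, B x y = 0) :
    ∀ x ∈ Submodule.span ℝ s, ∀ y ∈ Submodule.span ℝ t, B x y = 0 := by
  have step : ∀ x ∈ s, ∀ y ∈ Submodule.span ℝ t, B x y = 0 := by
    intro x hx y hy
    induction hy using Submodule.span_induction with
    | mem z hz => exact h x hx z hz
    | zero => simp
    | add a b _ _ ha hb => simp [ha, hb]
    | smul r a _ ha => simp [ha]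
  intro x hx y hy
  induction hx using Submodule.span_induction with
  | mem z hz => exact step z hz y hy
  | zero => simp
  | add a b _ _ ha hb => simp [LinearMap.add_apply, ha, hb]
  | smul r a _ ha => simp [ha]

lemma sum_perm_neg (g : Equiv.Perm (Fin 4) → ℝ) (τ : Equiv.Perm (Fin 4))
    (h : ∀ σ, g (σ * τ) = - g σ) : ∑ σ : Equiv.Perm (Fin 4), g σ = 0 := by
  have h1 : ∑ σ : Equiv.Perm (Fin 4), g ((Equiv.mulRight τ) σ)
      = ∑ σ : Equiv.Perm (Fin 4), g σ := Equiv.sum_comp (Equiv.mulRight τ) g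
  simp only [Equiv.coe_mulRight, h, Finset.sum_neg_distrib] at h1
  linarith

/-- The "middle swap" of a quadrilinear form: `(v₁⊗v₂, v₃⊗v₄) ↦ A(v₁⊗v₃, v₂⊗v₄)`. -/
noncomputable def swapMid (A : QF V) : QF V :=
  TensorProduct.curry ((TensorProduct.lift A).comp
    (TensorProduct.tensorTensorTensorComm ℝ V V V V).toLinearMap)

lemma swapMid_tmul (A : QF V) (a b c d : V) :
    swapMid A (a ⊗ₜ[ℝ] b) (c ⊗ₜ[ℝ] d) = A (a ⊗ₜ[ℝ] c) (b ⊗ₜ[ℝ] d) := by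
  simp [swapMid, TensorProduct.curry_apply, TensorProduct.tensorTensorTensorComm_tmul,
    TensorProduct.lift.tmul]

/-- kernel of the restriction map: forward direction. -/
lemma part1fwd (S : QF V) (hW : MemW S)
    (hz : ∀ Q ∈ Alt2T V, ∀ Q' ∈ Alt2T V, S Q Q' = 0) : IsTotSym S := by
  obtain ⟨h1, h2, h3⟩ := hW
  have h3' : ∀ a b c d : V,
      S (a ⊗ₜ[ℝ] b) (c ⊗ₜ[ℝ] d) + S (b ⊗ₜ[ℝ] a) (c ⊗ₜ[ℝ] d)
        - S (a ⊗ₜ[ℝ] b) (d ⊗ₜ[ℝ] c) - S (b ⊗ₜ[ℝ] a) (d ⊗ₜ[ℝ] c) = 0 := by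
    intro a b c d
    have := h3 a b c d
    simp only [map_add, map_sub, LinearMap.add_apply, LinearMap.sub_apply] at this
    linarith
  have z : ∀ a b c d : V,
      S (a ⊗ₜ[ℝ] b) (c ⊗ₜ[ℝ] d) - S (a ⊗ₜ[ℝ] b) (d ⊗ₜ[ℝ] c)
        - S (b ⊗ₜ[ℝ] a) (c ⊗ₜ[ℝ] d) + S (b ⊗ₜ[ℝ] a) (d ⊗ₜ[ℝ] c) = 0 := by
    intro a b c d
    have := hz (a ⊗ₜ[ℝ] b - b ⊗ₜ[ℝ] a) (Submodule.subset_span ⟨a, b, rfl⟩)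
      (c ⊗ₜ[ℝ] d - d ⊗ₜ[ℝ] c) (Submodule.subset_span ⟨c, d, rfl⟩)
    simp only [map_sub, LinearMap.sub_apply] at this
    linarith
  intro a b c d
  refine ⟨?_, ?_, ?_⟩
  · linear_combination (1/2 : ℝ) * h1 a d b c + (1/2 : ℝ) * h1 a d c b
      - (1/2 : ℝ) * h1 b d c a + (1/2 : ℝ) * h2 a b c d + (1/2 : ℝ) * h2 a b d c
      + (1/2 : ℝ) * h2 a c b d - (1/2 : ℝ) * h2 b a c d - (1/2 : ℝ) * h2 b a d c
      - (1/2 : ℝ) * h2 c a d b - (1/2 : ℝ) * h3' a c b d + (1/2 : ℝ) * h3' b c a d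
      + (1/2 : ℝ) * z a b c d
  · linear_combination h2 a b d c + (1/2 : ℝ) * h3' a b c d - (1/2 : ℝ) * h3' a c b d
      + (1/2 : ℝ) * z a b c d - (1/2 : ℝ) * z a c b d
  · linear_combination (1/2 : ℝ) * h3' a b c d + (1/2 : ℝ) * z a b c d

/-- kernel of the restriction map: backward direction. -/
lemma part1bwd (S : QF V) (hts : IsTotSym S) :
    ∀ Q ∈ Alt2T V, ∀ Q' ∈ Alt2T V, S Q Q' = 0 := by
  have key : ∀ x ∈ {x : V ⊗[ℝ] V | ∃ u v : V, x = u ⊗ₜ[ℝ] v - v ⊗ₜ[ℝ] u},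
      ∀ y ∈ {x : V ⊗[ℝ] V | ∃ u v : V, x = u ⊗ₜ[ℝ] v - v ⊗ₜ[ℝ] u}, S x y = 0 := by
    rintro x ⟨a, b, rfl⟩ y ⟨c, d, rfl⟩
    simp only [map_sub, LinearMap.sub_apply]
    linear_combination (hts a b c d).1 - (hts a b d c).1
  exact qf_vanish_span S key

/-- Full `S₄`-invariance from invariance under the three adjacent transpositions. -/
lemma totsym_eval (T : QF V) (h : IsTotSym T) (σ : Equiv.Perm (Fin 4)) (w : Fin 4 → V) :
    T (w (σ 0) ⊗ₜ[ℝ] w (σ 1)) (w (σ 2) ⊗ₜ[ℝ] w (σ 3))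
      = T (w 0 ⊗ₜ[ℝ] w 1) (w 2 ⊗ₜ[ℝ] w 3) := by
  have s12 : ∀ a b c d : V, T (a ⊗ₜ[ℝ] b) (c ⊗ₜ[ℝ] d) = T (b ⊗ₜ[ℝ] a) (c ⊗ₜ[ℝ] d) :=
    fun a b c d => (h a b c d).1
  have s23 : ∀ a b c d : V, T (a ⊗ₜ[ℝ] b) (c ⊗ₜ[ℝ] d) = T (a ⊗ₜ[ℝ] c) (b ⊗ₜ[ℝ] d) :=
    fun a b c d => (h a b c d).2.1
  have s34 : ∀ a b c d : V, T (a ⊗ₜ[ℝ] b) (c ⊗ₜ[ℝ] d) = T (a ⊗ₜ[ℝ] b) (d ⊗ₜ[ℝ] c) :=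
    fun a b c d => (h a b c d).2.2
  have s13 : ∀ a b c d : V, T (a ⊗ₜ[ℝ] b) (c ⊗ₜ[ℝ] d) = T (c ⊗ₜ[ℝ] b) (a ⊗ₜ[ℝ] d) := by
    intro a b c d
    rw [s12, s23, s12]
  have s24 : ∀ a b c d : V, T (a ⊗ₜ[ℝ] b) (c ⊗ₜ[ℝ] d) = T (a ⊗ₜ[ℝ] d) (c ⊗ₜ[ℝ] b) := by
    intro a b c d
    rw [s34, s23, s34]
  have s14 : ∀ a b c d : V, T (a ⊗ₜ[ℝ] b) (c ⊗ₜ[ℝ] d) = T (d ⊗ₜ[ℝ] b) (c ⊗ₜ[ℝ] a) := by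
    intro a b c d
    rw [s13, s34, s13]
  revert w
  refine Equiv.Perm.swap_induction_on σ (fun w => rfl) ?_
  intro f x y hxy ih w
  simp only [Equiv.Perm.mul_apply]
  have ih' := ih (w ∘ Equiv.swap x y)
  simp only [Function.comp_apply] at ih'
  rw [ih']
  fin_cases x <;> fin_cases y <;>
    first
      | (exact absurd rfl hxy)
      | (simp only [Equiv.swap_apply_def, Fin.isValue, Fin.reduceEq, if_true, if_false,
          reduceIte] <;>
         first
          | rfl
          | exact (s12 _ _ _ _).symm | exact (s13 _ _ _ _).symm | exact (s14 _ _ _ _).symm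
          | exact (s23 _ _ _ _).symm | exact (s24 _ _ _ _).symm | exact (s34 _ _ _ _).symm
          | exact s12 _ _ _ _ | exact s13 _ _ _ _ | exact s14 _ _ _ _
          | exact s23 _ _ _ _ | exact s24 _ _ _ _ | exact s34 _ _ _ _)

end AuxLemmas


/-- The restriction map `R' : W → Sym²(Λ²V*)` has kernel `Sym⁴V*` and image `K(V)`, and
restricts to an isomorphism `K_W ≅ K(V)`.  Concretely: (1) for `S ∈ W`, `R'(S) = 0` iff
`S` is totally symmetric; (2) for `S ∈ W`, the restriction of `S` to `Λ²V` satisfies the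
first Bianchi identity; (3) every algebraic curvature tensor is the restriction to `Λ²V`
of some `S ∈ K_W ⊆ W`; (4) elements of `K_W` agreeing on `Λ²V` are equal. -/
theorem stmt4 {V : Type*} [AddCommGroup V] [Module ℝ V] [FiniteDimensional ℝ V] :
    (∀ S : QF V, MemW S →
      ((∀ Q ∈ Alt2T V, ∀ Q' ∈ Alt2T V, S Q Q' = 0) ↔ IsTotSym S)) ∧
    (∀ S : QF V, MemW S → ∀ v₁ v₂ v₃ v₄ : V,
      S (v₁ ⊗ₜ[ℝ] v₂ - v₂ ⊗ₜ[ℝ] v₁) (v₃ ⊗ₜ[ℝ] v₄ - v₄ ⊗ₜ[ℝ] v₃)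
        + S (v₂ ⊗ₜ[ℝ] v₃ - v₃ ⊗ₜ[ℝ] v₂) (v₁ ⊗ₜ[ℝ] v₄ - v₄ ⊗ₜ[ℝ] v₁)
        + S (v₃ ⊗ₜ[ℝ] v₁ - v₁ ⊗ₜ[ℝ] v₃) (v₂ ⊗ₜ[ℝ] v₄ - v₄ ⊗ₜ[ℝ] v₂) = 0) ∧
    (∀ A : QF V, MemK A →
      ∃ S : QF V, MemW S ∧ TotSymZero S ∧
        ∀ Q ∈ Alt2T V, ∀ Q' ∈ Alt2T V, S Q Q' = A Q Q') ∧
    (∀ S₁ S₂ : QF V, MemW S₁ → MemW S₂ → TotSymZero S₁ → TotSymZero S₂ →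
      (∀ Q ∈ Alt2T V, ∀ Q' ∈ Alt2T V, S₁ Q Q' = S₂ Q Q') → S₁ = S₂) := by
  
  constructor
  · intro S hW
    exact ⟨part1fwd S hW, part1bwd S⟩
  refine ⟨?_, ?_, ?_⟩
  · -- Bianchi identity for the restriction of S ∈ W
    intro S hW v₁ v₂ v₃ v₄
    obtain ⟨h1, h2, h3⟩ := hW
    simp only [map_sub, LinearMap.sub_apply]
    linear_combination (-1 : ℝ) * h1 v₁ v₄ v₂ v₃ + h1 v₁ v₄ v₃ v₂ - h1 v₂ v₄ v₃ v₁
      + h2 v₁ v₂ v₃ v₄ - h2 v₁ v₂ v₄ v₃ - h2 v₁ v₃ v₂ v₄ - h2 v₂ v₁ v₃ v₄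
      + h2 v₂ v₁ v₄ v₃ - h2 v₃ v₁ v₄ v₂
  · -- surjectivity onto K(V)
    intro A hA
    obtain ⟨hk1, hk2, hk3, hb⟩ := hA
    set S : QF V := (4/3 : ℝ) • A - (2/3 : ℝ) • swapMid A with hSdef
    have hSt : ∀ a b c d : V, S (a ⊗ₜ[ℝ] b) (c ⊗ₜ[ℝ] d)
        = (4/3 : ℝ) * A (a ⊗ₜ[ℝ] b) (c ⊗ₜ[ℝ] d)
          - (2/3 : ℝ) * A (a ⊗ₜ[ℝ] c) (b ⊗ₜ[ℝ] d) := by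
      intro a b c d
      simp [hSdef, swapMid_tmul, LinearMap.sub_apply, LinearMap.smul_apply, smul_eq_mul]
    refine ⟨S, ⟨?_, ?_, ?_⟩, ?_, ?_⟩
    · intro v₁ v₂ v₃ v₄
      rw [hSt, hSt]
      linear_combination (2/3 : ℝ) * hk1 v₁ v₃ v₄ v₂ - (2/3 : ℝ) * hk2 v₁ v₃ v₂ v₄
        + (4/3 : ℝ) * hk3 v₁ v₂ v₃ v₄
    · intro v₁ v₂ v₃ v₄
      rw [hSt, hSt]
      linear_combination (-4/3 : ℝ) * hk1 v₁ v₃ v₂ v₄ + (2/3 : ℝ) * hk2 v₁ v₃ v₂ v₄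
        - (4/3 : ℝ) * hk2 v₁ v₄ v₂ v₃ + (4/3 : ℝ) * hk3 v₁ v₄ v₂ v₃
        + (4/3 : ℝ) * hb v₁ v₂ v₃ v₄
    · intro v₁ v₂ v₃ v₄
      simp only [map_add, map_sub, LinearMap.add_apply, LinearMap.sub_apply, hSt]
      linear_combination (4/3 : ℝ) * hk1 v₁ v₂ v₃ v₄ - (4/3 : ℝ) * hk1 v₁ v₂ v₄ v₃
        - (2/3 : ℝ) * hk3 v₁ v₃ v₂ v₄ + (2/3 : ℝ) * hk3 v₁ v₄ v₂ v₃
    · -- total symmetrization vanishes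
      intro v
      have Z1 : ∑ σ : Equiv.Perm (Fin 4),
          A (v (σ 0) ⊗ₜ[ℝ] v (σ 1)) (v (σ 2) ⊗ₜ[ℝ] v (σ 3)) = 0 := by
        apply sum_perm_neg _ (Equiv.swap 0 1)
        intro σ
        simp only [Equiv.Perm.mul_apply,
          show (Equiv.swap (0 : Fin 4) 1) 0 = 1 by decide,
          show (Equiv.swap (0 : Fin 4) 1) 1 = 0 by decide,
          show (Equiv.swap (0 : Fin 4) 1) 2 = 2 by decide,
          show (Equiv.swap (0 : Fin 4) 1) 3 = 3 by decide]
        linarith [hk1 (v (σ 0)) (v (σ 1)) (v (σ 2)) (v (σ 3))]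
      have Z2 : ∑ σ : Equiv.Perm (Fin 4),
          A (v (σ 0) ⊗ₜ[ℝ] v (σ 2)) (v (σ 1) ⊗ₜ[ℝ] v (σ 3)) = 0 := by
        apply sum_perm_neg _ (Equiv.swap 0 2)
        intro σ
        simp only [Equiv.Perm.mul_apply,
          show (Equiv.swap (0 : Fin 4) 2) 0 = 2 by decide,
          show (Equiv.swap (0 : Fin 4) 2) 1 = 1 by decide,
          show (Equiv.swap (0 : Fin 4) 2) 2 = 0 by decide,
          show (Equiv.swap (0 : Fin 4) 2) 3 = 3 by decide]
        linarith [hk1 (v (σ 0)) (v (σ 2)) (v (σ 1)) (v (σ 3))]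
      simp only [hSt]
      rw [Finset.sum_sub_distrib, ← Finset.mul_sum, ← Finset.mul_sum, Z1, Z2]
      ring
    · -- the restriction of S to Λ²V agrees with A
      have key : ∀ x ∈ {x : V ⊗[ℝ] V | ∃ u v : V, x = u ⊗ₜ[ℝ] v - v ⊗ₜ[ℝ] u},
          ∀ y ∈ {x : V ⊗[ℝ] V | ∃ u v : V, x = u ⊗ₜ[ℝ] v - v ⊗ₜ[ℝ] u},
          (S - A) x y = 0 := by
        rintro x ⟨a, b, rfl⟩ y ⟨c, d, rfl⟩
        simp only [LinearMap.sub_apply, map_sub, hSt]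
        linear_combination (-1/3 : ℝ) * hk1 a b c d + (1/3 : ℝ) * hk1 a b d c
          - (4/3 : ℝ) * hk1 a c b d - (2/3 : ℝ) * hk2 a b c d + (2/3 : ℝ) * hk3 a c b d
          + (2/3 : ℝ) * hk3 a d b c + (4/3 : ℝ) * hb a b c d
      intro Q hQ Q' hQ'
      have hz := qf_vanish_span (S - A) key Q hQ Q' hQ'
      simp only [LinearMap.sub_apply] at hz
      linarith
  · -- injectivity on K_W
    intro S₁ S₂ hW₁ hW₂ ht₁ ht₂ hagree
    have hWT : MemW (S₁ - S₂) := by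
      refine ⟨?_, ?_, ?_⟩ <;> intro v₁ v₂ v₃ v₄ <;> simp only [LinearMap.sub_apply]
      · rw [hW₁.1 v₁ v₂ v₃ v₄, hW₂.1 v₁ v₂ v₃ v₄]
      · rw [hW₁.2.1 v₁ v₂ v₃ v₄, hW₂.2.1 v₁ v₂ v₃ v₄]
      · rw [hW₁.2.2 v₁ v₂ v₃ v₄, hW₂.2.2 v₁ v₂ v₃ v₄, sub_zero]
    have hzT : ∀ Q ∈ Alt2T V, ∀ Q' ∈ Alt2T V, (S₁ - S₂) Q Q' = 0 := by
      intro Q hQ Q' hQ'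
      simp only [LinearMap.sub_apply]
      rw [hagree Q hQ Q' hQ', sub_self]
    have htsT := part1fwd (S₁ - S₂) hWT hzT
    have hptw : ∀ a b c d : V, (S₁ - S₂) (a ⊗ₜ[ℝ] b) (c ⊗ₜ[ℝ] d) = 0 := by
      intro a b c d
      have hsum : ∑ σ : Equiv.Perm (Fin 4),
          (S₁ - S₂) (![a,b,c,d] (σ 0) ⊗ₜ[ℝ] ![a,b,c,d] (σ 1))
            (![a,b,c,d] (σ 2) ⊗ₜ[ℝ] ![a,b,c,d] (σ 3)) = 0 := by
        simp only [LinearMap.sub_apply, Finset.sum_sub_distrib]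
        rw [ht₁ ![a,b,c,d], ht₂ ![a,b,c,d], sub_zero]
      rw [Finset.sum_congr rfl fun σ _ => totsym_eval (S₁ - S₂) htsT σ ![a,b,c,d]] at hsum
      simp only [Finset.sum_const, Finset.card_univ, nsmul_eq_mul] at hsum
      have e0 : (![a,b,c,d] : Fin 4 → V) 0 = a := rfl
      have e1 : (![a,b,c,d] : Fin 4 → V) 1 = b := rfl
      have e2 : (![a,b,c,d] : Fin 4 → V) 2 = c := rfl
      have e3 : (![a,b,c,d] : Fin 4 → V) 3 = d := rfl
      rw [e0, e1, e2, e3] at hsum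
      have hcard : ((Fintype.card (Equiv.Perm (Fin 4)) : ℕ) : ℝ) = 24 := by
        simp [Fintype.card_perm]
        norm_num [Nat.factorial]
      rw [hcard] at hsum
      linarith
    apply TensorProduct.ext'
    intro x y
    apply TensorProduct.ext'
    intro z w
    have h0 := hptw x y z w
    simp only [LinearMap.sub_apply] at h0
    linarith
end
end

section
/- If S ∈ C_W and the total symmetrization of S vanishes (i.e. S ∈ K_W), then S = 0. In other words, K_W ∩ C_W = {0}. -/
open TensorProduct

noncomputable section

variable {V : Type*} [AddCommGroup V] [Module ℝ V]

/-- Cauchy–Schwarz type lemma: a symmetric PSD bilinear form vanishes on `x × everything`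
as soon as it vanishes at `(x, x)`. -/
lemma cs_aux {S : QF V} (hsymm : ∀ x y : V ⊗[ℝ] V, S x y = S y x)
    (hpsd : ∀ Q : V ⊗[ℝ] V, 0 ≤ S Q Q) {x : V ⊗[ℝ] V} (hx : S x x = 0)
    (y : V ⊗[ℝ] V) : S x y = 0 := by
  set a := S y y with ha
  set c := S x y with hc
  have key : ∀ t : ℝ, 0 ≤ t ^ 2 * a + 2 * t * c := by
    intro t
    have h := hpsd (x + t • y)
    simp only [map_add, map_smul, LinearMap.add_apply, LinearMap.smul_apply,
      smul_eq_mul] at h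
    have hyx : S y x = c := by rw [hsymm y x, ← hc]
    rw [hx, hyx, ← ha, ← hc] at h
    ring_nf at h ⊢
    linarith
  have ha0 : 0 ≤ a := hpsd y
  have hpos : (0 : ℝ) < a + 1 := by linarith
  have h := key (-c / (a + 1))
  have hne : a + 1 ≠ 0 := ne_of_gt hpos
  have h3 : (-c / (a + 1)) ^ 2 * a + 2 * (-c / (a + 1)) * c =
      (c ^ 2 * a - 2 * c ^ 2 * (a + 1)) / (a + 1) ^ 2 := by
    field_simp
    ring
  rw [h3] at h
  have h4 := mul_nonneg h (sq_nonneg (a + 1))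
  rw [div_mul_cancel₀ _ (pow_ne_zero 2 hne)] at h4
  have hcc : c ^ 2 ≤ 0 := by nlinarith
  have hc0 : c ^ 2 = 0 := le_antisymm hcc (sq_nonneg c)
  exact pow_eq_zero_iff (two_ne_zero) |>.mp hc0

/-- If `S ∈ C_W` and the total symmetrization of `S` vanishes (`S ∈ K_W`), then `S = 0`;
in other words `K_W ∩ C_W = {0}`. -/
theorem stmt6 {V : Type*} [AddCommGroup V] [Module ℝ V] [FiniteDimensional ℝ V]
    (S : QF V) (hS : MemCW S) (htot : TotSymZero S) : S = 0 := by
  obtain ⟨⟨h1, h2, _h3⟩, hpsd⟩ := hS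
  -- symmetry of S on all tensors
  have hflip : S = S.flip := by
    apply TensorProduct.ext'
    intro u v
    apply TensorProduct.ext'
    intro x y
    exact h1 u v x y
  have hsymm : ∀ x y : V ⊗[ℝ] V, S x y = S y x := by
    intro x y
    nth_rewrite 1 [hflip]
    rfl
  -- diagonal vanishing on v ⊗ v
  have hdiag : ∀ v : V, S (v ⊗ₜ[ℝ] v) (v ⊗ₜ[ℝ] v) = 0 := by
    intro v
    have h := htot (fun _ => v)
    simp only [Finset.sum_const, smul_eq_mul, nsmul_eq_mul] at h
    have hcard : (Finset.univ : Finset (Equiv.Perm (Fin 4))).card = 24 := by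
      simp [Finset.card_univ, Fintype.card_perm, Nat.factorial]
    rw [hcard] at h
    push_cast at h
    linarith
  have hfirst : ∀ (u : V) (y : V ⊗[ℝ] V), S (u ⊗ₜ[ℝ] u) y = 0 :=
    fun u y => cs_aux hsymm hpsd (hdiag u) y
  -- sum rule: S(u⊗v) y + S(v⊗u) y = 0
  have hsum : ∀ (u v : V) (y : V ⊗[ℝ] V), S (u ⊗ₜ[ℝ] v) y + S (v ⊗ₜ[ℝ] u) y = 0 := by
    intro u v y
    have h := hfirst (u + v) y
    simp only [TensorProduct.add_tmul, TensorProduct.tmul_add, map_add,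
      LinearMap.add_apply, hfirst u y, hfirst v y] at h
    linarith
  -- S(u⊗v)(v⊗u) = 0
  have hvu : ∀ u v : V, S (u ⊗ₜ[ℝ] v) (v ⊗ₜ[ℝ] u) = 0 := by
    intro u v
    rw [h2 u v v u]
    exact hfirst u (v ⊗ₜ[ℝ] v)
  -- S(u⊗v)(u⊗v) = 0
  have hdiag2 : ∀ u v : V, S (u ⊗ₜ[ℝ] v) (u ⊗ₜ[ℝ] v) = 0 := by
    intro u v
    have h := hsum u v (u ⊗ₜ[ℝ] v)
    have h' : S (v ⊗ₜ[ℝ] u) (u ⊗ₜ[ℝ] v) = 0 := by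
      rw [hsymm]; exact hvu u v
    linarith
  have hall : ∀ (u v : V) (y : V ⊗[ℝ] V), S (u ⊗ₜ[ℝ] v) y = 0 :=
    fun u v y => cs_aux hsymm hpsd (hdiag2 u v) y
  apply TensorProduct.ext'
  intro u v
  apply TensorProduct.ext'
  intro x y
  exact hall u v (x ⊗ₜ[ℝ] y)
end
end

section
/- Let γ be a symmetric bilinear form on a finite-dimensional real vector space V such that γ(x,y)² − γ(x,x)γ(y,y) ≥ 0 for all x, y ∈ V (i.e., the restriction of γ to every 2-dimensional subspace is degenerate or indefinite). Then the rank of γ is at most 2, and if the rank of γ equals 2, then γ is indefinite, i.e. γ has signature (+,−,0,…,0). -/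
/-- Let `γ` be a symmetric bilinear form on a finite-dimensional real vector space such
that `γ(x,y)² − γ(x,x)γ(y,y) ≥ 0` for all `x, y` (the restriction of `γ` to every plane
is degenerate or indefinite).  Then `rk γ ≤ 2`, and if `rk γ = 2` then `γ` is indefinite,
i.e. it has signature `(+,−,0,…,0)`. -/
theorem stmt8 {V : Type*} [AddCommGroup V] [Module ℝ V] [FiniteDimensional ℝ V]
    (γ : V →ₗ[ℝ] V →ₗ[ℝ] ℝ) (hsym : ∀ x y : V, γ x y = γ y x)
    (h : ∀ x y : V, 0 ≤ (γ x y) ^ 2 - γ x x * γ y y) :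
    Module.finrank ℝ V - Module.finrank ℝ (LinearMap.ker γ) ≤ 2 ∧
      (Module.finrank ℝ V - Module.finrank ℝ (LinearMap.ker γ) = 2 →
        (∃ x : V, 0 < γ x x) ∧ (∃ y : V, γ y y < 0)) := by
  classical
  have hsymm : γ.IsSymm := LinearMap.isSymm_def.2 fun x y => hsym x y
  obtain ⟨v, hv⟩ := LinearMap.BilinForm.exists_orthogonal_basis hsymm
  have hn : Module.finrank ℝ V = Module.finrank ℝ V := rfl
  set d : Fin (Module.finrank ℝ V) → ℝ := fun i => γ (v i) (v i) with hd
  -- basis vectors with zero diagonal lie in the kernel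
  have hker : ∀ i, d i = 0 → v i ∈ LinearMap.ker γ := by
    intro i hi
    rw [LinearMap.mem_ker]
    apply v.ext
    intro j
    rcases eq_or_ne i j with rfl | hij
    · simpa using hi
    · exact hv hij
  -- sign condition on the diagonal
  have hsign : ∀ i j, i ≠ j → d i * d j ≤ 0 := by
    intro i j hij
    have := h (v i) (v j)
    have h0 : γ (v i) (v j) = 0 := hv hij
    rw [h0] at this
    nlinarith [this]
  -- finsets of positive / negative / nonzero diagonal entries
  set P : Finset (Fin (Module.finrank ℝ V)) := Finset.univ.filter (fun i => 0 < d i) with hP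
  set N : Finset (Fin (Module.finrank ℝ V)) := Finset.univ.filter (fun i => d i < 0) with hN
  set S : Finset (Fin (Module.finrank ℝ V)) := Finset.univ.filter (fun i => d i ≠ 0) with hS
  have hPcard : P.card ≤ 1 := by
    refine Finset.card_le_one.2 ?_
    intro a ha b hb
    by_contra hab
    have := hsign a b hab
    simp [hP, Finset.mem_filter] at ha hb
    nlinarith
  have hNcard : N.card ≤ 1 := by
    refine Finset.card_le_one.2 ?_
    intro a ha b hb
    by_contra hab
    have := hsign a b hab
    simp [hN, Finset.mem_filter] at ha hb
    nlinarith
  have hSsub : S ⊆ P ∪ N := by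
    intro i hi
    simp [hS, Finset.mem_filter] at hi
    rcases lt_or_gt_of_ne hi with hlt | hgt
    · exact Finset.mem_union_right _ (by simp [hN, hlt])
    · exact Finset.mem_union_left _ (by simp [hP, hgt])
  have hScard : S.card ≤ 2 := by
    calc S.card ≤ (P ∪ N).card := Finset.card_le_card hSsub
    _ ≤ P.card + N.card := Finset.card_union_le _ _
    _ ≤ 2 := by omega
  -- lower bound for the kernel dimension
  have hli : LinearIndependent ℝ (fun i : {i : Fin (Module.finrank ℝ V) // d i = 0} => v i) :=
    v.linearIndependent.comp Subtype.val Subtype.val_injective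
  have hspan_le : Submodule.span ℝ (Set.range (fun i : {i : Fin (Module.finrank ℝ V) // d i = 0} => v i)) ≤
      LinearMap.ker γ := by
    rw [Submodule.span_le]
    rintro x ⟨i, rfl⟩
    exact hker i i.2
  have hcardT : Fintype.card {i : Fin (Module.finrank ℝ V) // d i = 0} = Module.finrank ℝ V - S.card := by
    rw [Fintype.card_subtype]
    have := Finset.card_filter_add_card_filter_not
      (s := (Finset.univ : Finset (Fin (Module.finrank ℝ V)))) (p := fun i => d i = 0)
    simp only [Finset.card_univ, Fintype.card_fin] at this
    have hSc : S.card = (Finset.univ.filter (fun i => ¬ d i = 0)).card := by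
      simp [hS]
    omega
  have hkerge : Module.finrank ℝ V - S.card ≤ Module.finrank ℝ (LinearMap.ker γ) := by
    have h1 : Module.finrank ℝ (Submodule.span ℝ
        (Set.range (fun i : {i : Fin (Module.finrank ℝ V) // d i = 0} => v i))) =
        Fintype.card {i : Fin (Module.finrank ℝ V) // d i = 0} := finrank_span_eq_card hli
    have h2 := Submodule.finrank_mono hspan_le
    omega
  have hkerle : Module.finrank ℝ (LinearMap.ker γ) ≤ Module.finrank ℝ V := Submodule.finrank_le _
  constructor
  · omega
  · intro hrank
    have hS2 : 2 ≤ S.card := by omega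
    have hP1 : 1 ≤ P.card := by
      have := Finset.card_le_card hSsub
      have := Finset.card_union_le P N
      omega
    have hN1 : 1 ≤ N.card := by
      have := Finset.card_le_card hSsub
      have := Finset.card_union_le P N
      omega
    obtain ⟨i, hi⟩ := Finset.card_pos.1 (by omega : 0 < P.card)
    obtain ⟨j, hj⟩ := Finset.card_pos.1 (by omega : 0 < N.card)
    simp [hP, Finset.mem_filter] at hi
    simp [hN, Finset.mem_filter] at hj
    exact ⟨⟨v i, hi⟩, ⟨v j, hj⟩⟩
end

section
/- Suppose dim V ≥ 2. If S ∈ C_W is extremal, then ker R(S) ≠ {0}, i.e. the restriction of S to Sym²V is a degenerate bilinear form. -/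
open TensorProduct

noncomputable section

variable {V : Type*} [AddCommGroup V] [Module ℝ V]

namespace Stmt9Aux

def flipT (V : Type*) [AddCommGroup V] [Module ℝ V] : V ⊗[ℝ] V →ₗ[ℝ] V ⊗[ℝ] V :=
  (TensorProduct.comm ℝ V V).toLinearMap

@[simp] lemma flipT_tmul (a b : V) : flipT V (a ⊗ₜ[ℝ] b) = b ⊗ₜ[ℝ] a := rfl

lemma mem_sym (Q : V ⊗[ℝ] V) : Q + flipT V Q ∈ Sym2T V := by
  have h : (⊤ : Submodule ℝ (V ⊗[ℝ] V)) ≤ (Sym2T V).comap (LinearMap.id + flipT V) := by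
    rw [← TensorProduct.span_tmul_eq_top ℝ V V]
    refine Submodule.span_le.2 ?_
    rintro _ ⟨a, b, rfl⟩
    simp only [SetLike.mem_coe, Submodule.mem_comap, LinearMap.add_apply, LinearMap.id_apply,
      flipT_tmul]
    exact Submodule.subset_span ⟨a, b, rfl⟩
  simpa using h (Submodule.mem_top (x := Q))

lemma mem_alt (Q : V ⊗[ℝ] V) : Q - flipT V Q ∈ Alt2T V := by
  have h : (⊤ : Submodule ℝ (V ⊗[ℝ] V)) ≤ (Alt2T V).comap (LinearMap.id - flipT V) := by
    rw [← TensorProduct.span_tmul_eq_top ℝ V V]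
    refine Submodule.span_le.2 ?_
    rintro _ ⟨a, b, rfl⟩
    simp only [SetLike.mem_coe, Submodule.mem_comap, LinearMap.sub_apply, LinearMap.id_apply,
      flipT_tmul]
    exact Submodule.subset_span ⟨a, b, rfl⟩
  simpa using h (Submodule.mem_top (x := Q))

lemma symm_of_memW {S : QF V} (hW : MemW S) (x y : V ⊗[ℝ] V) : S x y = S y x := by
  have h : S = S.flip :=
    TensorProduct.ext' fun a b => TensorProduct.ext' fun c d => by
      simpa using hW.1 a b c d
  conv_lhs => rw [h]
  rfl

lemma ortho {S : QF V} (hW : MemW S) {x y : V ⊗[ℝ] V} (hx : x ∈ Sym2T V) (hy : y ∈ Alt2T V) :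
    S x y = 0 := by
  induction hx using Submodule.span_induction with
  | mem x hxm =>
    obtain ⟨u, v, rfl⟩ := hxm
    induction hy using Submodule.span_induction with
    | mem y hym => obtain ⟨c, d, rfl⟩ := hym; exact hW.2.2 u v c d
    | zero => simp
    | add y z _ _ h1 h2 => rw [map_add, h1, h2, add_zero]
    | smul r y _ h1 => rw [map_smul, smul_eq_mul, h1, mul_zero]
  | zero => simp
  | add a b _ _ h1 h2 => rw [map_add, LinearMap.add_apply, h1, h2, add_zero]
  | smul r a _ h1 => rw [map_smul, LinearMap.smul_apply, h1, smul_eq_mul, mul_zero]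

def Phi (φ : V →ₗ[ℝ] ℝ) : V ⊗[ℝ] V →ₗ[ℝ] ℝ :=
  TensorProduct.lift ((LinearMap.mul ℝ ℝ).compl₁₂ φ φ)

@[simp] lemma Phi_tmul (φ : V →ₗ[ℝ] ℝ) (a b : V) : Phi φ (a ⊗ₜ[ℝ] b) = φ a * φ b := rfl

def Sphi (φ : V →ₗ[ℝ] ℝ) : QF V := (LinearMap.mul ℝ ℝ).compl₁₂ (Phi φ) (Phi φ)

@[simp] lemma Sphi_apply (φ : V →ₗ[ℝ] ℝ) (x y : V ⊗[ℝ] V) :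
    Sphi φ x y = Phi φ x * Phi φ y := rfl

lemma Phi_alt (φ : V →ₗ[ℝ] ℝ) {y : V ⊗[ℝ] V} (hy : y ∈ Alt2T V) : Phi φ y = 0 := by
  induction hy using Submodule.span_induction with
  | mem y hym => obtain ⟨u, v, rfl⟩ := hym; simp [mul_comm]
  | zero => simp
  | add y z _ _ h1 h2 => simp [h1, h2]
  | smul r y _ h1 => simp [h1]

lemma memW_Sphi (φ : V →ₗ[ℝ] ℝ) : MemW (Sphi φ) := by
  refine ⟨fun a b c d => by simp [mul_comm, mul_left_comm, mul_assoc],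
    fun a b c d => by simp [mul_comm, mul_left_comm, mul_assoc],
    fun a b c d => by simp; ring⟩

lemma cs {S : QF V} (hsym : ∀ x y, S x y = S y x) (hpos : ∀ Q, 0 ≤ S Q Q) (x y : V ⊗[ℝ] V) :
    (S x y) ^ 2 ≤ S x x * S y y := by
  have h := discrim_le_zero (a := S y y) (b := 2 * S x y) (c := S x x) ?_
  · rw [discrim] at h; nlinarith [h]
  · intro r
    have h0 := hpos (x + r • y)
    have e : S y x = S x y := hsym y x
    simp only [map_add, map_smul, LinearMap.add_apply, LinearMap.smul_apply, smul_eq_mul, e] at h0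
    ring_nf at h0 ⊢
    linarith

end Stmt9Aux

set_option maxHeartbeats 1000000 in
/-- If `dim V ≥ 2` and `S ∈ C_W` is extremal, then `ker R(S) ≠ {0}`: there is a nonzero
symmetric 2-tensor `T` with `S(T, T') = 0` for all symmetric 2-tensors `T'`. -/
theorem stmt9 {V : Type*} [AddCommGroup V] [Module ℝ V] [FiniteDimensional ℝ V]
    (h2 : 2 ≤ Module.finrank ℝ V)
    (S : QF V) (hS : IsExtremalCW S) :
    ∃ T ∈ Sym2T V, T ≠ 0 ∧ ∀ T' ∈ Sym2T V, S T T' = 0 := by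
  classical
  by_contra hcon
  push_neg at hcon
  obtain ⟨⟨hW, hpos⟩, hS0, hext⟩ := hS
  have hsym := Stmt9Aux.symm_of_memW hW
  set B : LinearMap.BilinForm ℝ (Sym2T V) := LinearMap.BilinForm.restrict S (Sym2T V) with hBdef
  have hB : B.Nondegenerate := by
    have hL : B.SeparatingLeft := by
      intro m hm
      by_contra hm0
      have hm1 : (m : V ⊗[ℝ] V) ≠ 0 := fun h => hm0 (Subtype.ext h)
      obtain ⟨T', hT', hne⟩ := hcon m m.2 hm1
      exact hne (hm ⟨T', hT'⟩)
    refine ⟨hL, fun m hm => hL m fun n => ?_⟩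
    show S (m : V ⊗[ℝ] V) (n : V ⊗[ℝ] V) = 0
    rw [hsym]; exact hm n
  have key : ∀ φ : V →ₗ[ℝ] ℝ, ∃ c : ℝ, Stmt9Aux.Sphi φ = c • S := by
    intro φ
    -- Riesz representative for Φ restricted to Sym²
    obtain ⟨t, hriesz⟩ : ∃ t : Sym2T V, ∀ Q : Sym2T V,
        S (t : V ⊗[ℝ] V) (Q : V ⊗[ℝ] V) = Stmt9Aux.Phi φ (Q : V ⊗[ℝ] V) := by
      refine ⟨(B.toDual hB).symm ((Stmt9Aux.Phi φ).comp (Sym2T V).subtype), fun Q => ?_⟩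
      have h1 : (B.toDual hB) ((B.toDual hB).symm ((Stmt9Aux.Phi φ).comp (Sym2T V).subtype)) =
          (Stmt9Aux.Phi φ).comp (Sym2T V).subtype := LinearEquiv.apply_symm_apply _ _
      have h2 := congrFun (congrArg DFunLike.coe h1) Q
      rwa [LinearMap.BilinForm.toDual_def] at h2
    set C : ℝ := S (t : V ⊗[ℝ] V) (t : V ⊗[ℝ] V) with hCdef
    have hC : 0 ≤ C := hpos _
    set ε : ℝ := (C + 1)⁻¹ with hεdef
    have hε : 0 < ε := by positivity
    have hεC : ε * C ≤ 1 := by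
      rw [hεdef]
      rw [inv_mul_le_iff₀ (by linarith)]
      linarith
    obtain ⟨w1, w2, w3⟩ := Stmt9Aux.memW_Sphi (V := V) φ
    -- the two summands
    have hS1 : MemCW (ε • Stmt9Aux.Sphi φ) := by
      refine ⟨⟨fun a b c d => ?_, fun a b c d => ?_, fun a b c d => ?_⟩, fun Q => ?_⟩
      · simp only [LinearMap.smul_apply, smul_eq_mul]; rw [w1 a b c d]
      · simp only [LinearMap.smul_apply, smul_eq_mul]; rw [w2 a b c d]
      · simp only [LinearMap.smul_apply, smul_eq_mul]; rw [w3 a b c d, mul_zero]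
      · simp only [LinearMap.smul_apply, smul_eq_mul, Stmt9Aux.Sphi_apply]
        have := mul_self_nonneg (Stmt9Aux.Phi φ Q)
        nlinarith
    have hS0cw : MemCW (S - ε • Stmt9Aux.Sphi φ) := by
      refine ⟨⟨fun a b c d => ?_, fun a b c d => ?_, fun a b c d => ?_⟩, fun Q => ?_⟩
      · simp only [LinearMap.sub_apply, LinearMap.smul_apply, smul_eq_mul]
        rw [hW.1 a b c d, w1 a b c d]
      · simp only [LinearMap.sub_apply, LinearMap.smul_apply, smul_eq_mul]
        rw [hW.2.1 a b c d, w2 a b c d]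
      · simp only [LinearMap.sub_apply, LinearMap.smul_apply, smul_eq_mul]
        rw [hW.2.2 a b c d, w3 a b c d, mul_zero, sub_zero]
      · -- the positivity estimate
        set Qs : V ⊗[ℝ] V := (2⁻¹ : ℝ) • (Q + Stmt9Aux.flipT V Q) with hQsdef
        set Qa : V ⊗[ℝ] V := (2⁻¹ : ℝ) • (Q - Stmt9Aux.flipT V Q) with hQadef
        have hQs : Qs ∈ Sym2T V := Submodule.smul_mem _ _ (Stmt9Aux.mem_sym Q)
        have hQa : Qa ∈ Alt2T V := Submodule.smul_mem _ _ (Stmt9Aux.mem_alt Q)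
        have hQ : Q = Qs + Qa := by rw [hQsdef, hQadef]; module
        have ho1 : S Qs Qa = 0 := Stmt9Aux.ortho hW hQs hQa
        have ho2 : S Qa Qs = 0 := by rw [hsym]; exact ho1
        have hSQ : S Q Q = S Qs Qs + S Qa Qa := by
          rw [hQ]
          simp only [map_add, LinearMap.add_apply, ho1, ho2]
          ring
        have hΦ : Stmt9Aux.Phi φ Q = Stmt9Aux.Phi φ Qs := by
          rw [hQ, map_add, Stmt9Aux.Phi_alt φ hQa, add_zero]
        have hCS : (Stmt9Aux.Phi φ Qs) ^ 2 ≤ C * S Qs Qs := by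
          have h1 := Stmt9Aux.cs hsym hpos (t : V ⊗[ℝ] V) Qs
          have h2 := hriesz ⟨Qs, hQs⟩
          simp only at h2
          rw [← h2]
          exact h1
        have hpQs := hpos Qs
        have hpQa := hpos Qa
        simp only [LinearMap.sub_apply, LinearMap.smul_apply, smul_eq_mul,
          Stmt9Aux.Sphi_apply]
        rw [hSQ, hΦ]
        rw [pow_two] at hCS
        have h3 : ε * (Stmt9Aux.Phi φ Qs * Stmt9Aux.Phi φ Qs) ≤ ε * (C * S Qs Qs) :=
          mul_le_mul_of_nonneg_left hCS hε.le
        have h4 : ε * C * S Qs Qs ≤ 1 * S Qs Qs := mul_le_mul_of_nonneg_right hεC hpQs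
        have h5 : ε * (C * S Qs Qs) = ε * C * S Qs Qs := by ring
        linarith [h3, h4, hpQa]
    have hsum : S = (S - ε • Stmt9Aux.Sphi φ) + ε • Stmt9Aux.Sphi φ := by abel
    obtain ⟨-, b, hb0, hb⟩ := hext _ _ hS0cw hS1 hsum
    refine ⟨ε⁻¹ * b, ?_⟩
    rw [← smul_smul, ← hb, smul_smul, inv_mul_cancel₀ hε.ne', one_smul]
  -- now derive a contradiction using two coordinate functionals
  let bV := Module.finBasis ℝ V
  let i0 : Fin (Module.finrank ℝ V) := ⟨0, by omega⟩
  let i1 : Fin (Module.finrank ℝ V) := ⟨1, by omega⟩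
  set e₁ : V := bV i0 with he1
  set e₂ : V := bV i1 with he2
  set φ₁ := bV.coord i0 with hφ1
  set φ₂ := bV.coord i1 with hφ2
  have hφ11 : φ₁ e₁ = 1 := by simp [hφ1, he1]
  have hφ12 : φ₁ e₂ = 0 := by simp [hφ1, he2, i0, i1, Fin.ext_iff]
  have hφ22 : φ₂ e₂ = 1 := by simp [hφ2, he2]
  obtain ⟨c₁, hc₁⟩ := key φ₁
  obtain ⟨c₂, hc₂⟩ := key φ₂
  set x₁ : V ⊗[ℝ] V := e₁ ⊗ₜ[ℝ] e₁ with hx1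
  set x₂ : V ⊗[ℝ] V := e₂ ⊗ₜ[ℝ] e₂ with hx2
  have hA : c₁ * S x₁ x₁ = 1 := by
    have := congrFun (congrArg DFunLike.coe (congrFun (congrArg DFunLike.coe hc₁) x₁)) x₁
    simp only [Stmt9Aux.Sphi_apply, hx1, Stmt9Aux.Phi_tmul, hφ11, LinearMap.smul_apply,
      smul_eq_mul] at this
    linarith [this]
  have hB2 : c₁ * S x₂ x₂ = 0 := by
    have := congrFun (congrArg DFunLike.coe (congrFun (congrArg DFunLike.coe hc₁) x₂)) x₂
    simp only [Stmt9Aux.Sphi_apply, hx2, Stmt9Aux.Phi_tmul, hφ12, LinearMap.smul_apply,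
      smul_eq_mul] at this
    linarith [this]
  have hC2 : c₂ * S x₂ x₂ = 1 := by
    have := congrFun (congrArg DFunLike.coe (congrFun (congrArg DFunLike.coe hc₂) x₂)) x₂
    simp only [Stmt9Aux.Sphi_apply, hx2, Stmt9Aux.Phi_tmul, hφ22, LinearMap.smul_apply,
      smul_eq_mul] at this
    linarith [this]
  rcases mul_eq_zero.mp hB2 with h | h
  · rw [h, zero_mul] at hA; exact one_ne_zero hA.symm
  · rw [h, mul_zero] at hC2; exact one_ne_zero hC2.symm
end
end

section
/- Let S ∈ C_W be such that R'(S) is nondegenerate on Λ²V and such that R(S) is not extremal in C_Sym (i.e. R(S) does not have rank one). Then S is not extremal in C_W. Moreover, if dim V > 2, then every extremal S ∈ C_W has ker R'(S) ≠ {0}. -/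
open TensorProduct

noncomputable section

variable {V : Type*} [AddCommGroup V] [Module ℝ V]

/-- The restriction `R(S)` of `S` to `Sym²V` has rank one, i.e. it factors as `φ ⊗ φ` for
a linear functional `φ` not vanishing identically on `Sym²V`.  For `S ∈ C_W` this is
equivalent to `R(S)` being extremal in the cone `C_Sym`. -/
def RSrankOne (S : QF V) : Prop :=
  ∃ φ : (V ⊗[ℝ] V) →ₗ[ℝ] ℝ, (∃ T ∈ Sym2T V, φ T ≠ 0) ∧
    ∀ T ∈ Sym2T V, ∀ T' ∈ Sym2T V, S T T' = φ T * φ T'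


namespace Stmt10Aux

variable {S : QF V}

lemma alt_ann (f : (V ⊗[ℝ] V) →ₗ[ℝ] ℝ) (hf : ∀ c d : V, f (c ⊗ₜ[ℝ] d - d ⊗ₜ[ℝ] c) = 0)
    {Q : V ⊗[ℝ] V} (hQ : Q ∈ Alt2T V) : f Q = 0 := by
  induction hQ using Submodule.span_induction with
  | mem x hx => obtain ⟨c, d, rfl⟩ := hx; exact hf c d
  | zero => exact map_zero f
  | add x y _ _ hx hy => rw [map_add, hx, hy, add_zero]
  | smul r x _ hx => rw [map_smul, hx, smul_zero]

lemma sym_ann (f : (V ⊗[ℝ] V) →ₗ[ℝ] ℝ) (hf : ∀ c d : V, f (c ⊗ₜ[ℝ] d + d ⊗ₜ[ℝ] c) = 0)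
    {Q : V ⊗[ℝ] V} (hQ : Q ∈ Sym2T V) : f Q = 0 := by
  induction hQ using Submodule.span_induction with
  | mem x hx => obtain ⟨c, d, rfl⟩ := hx; exact hf c d
  | zero => exact map_zero f
  | add x y _ _ hx hy => rw [map_add, hx, hy, add_zero]
  | smul r x _ hx => rw [map_smul, hx, smul_zero]

lemma memW_symm (h : MemW S) (x y : V ⊗[ℝ] V) : S x y = S y x := by
  have hS : S = S.flip := by
    refine TensorProduct.ext' fun a b => TensorProduct.ext' fun c d => ?_
    simpa [LinearMap.flip_apply] using h.1 a b c d
  conv_lhs => rw [hS]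
  simp [LinearMap.flip_apply]

lemma memW_cross (h : MemW S) {T Q : V ⊗[ℝ] V} (hT : T ∈ Sym2T V) (hQ : Q ∈ Alt2T V) :
    S T Q = 0 := by
  have : (S.flip Q) T = 0 := by
    refine sym_ann _ (fun a b => ?_) hT
    have : S (a ⊗ₜ[ℝ] b + b ⊗ₜ[ℝ] a) Q = 0 :=
      alt_ann (S (a ⊗ₜ[ℝ] b + b ⊗ₜ[ℝ] a)) (fun c d => by
        simpa [map_sub, LinearMap.sub_apply] using h.2.2 a b c d) hQ
    simpa [LinearMap.flip_apply] using this
  simpa [LinearMap.flip_apply] using this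

lemma decomp (Q : V ⊗[ℝ] V) : ∃ Qs ∈ Sym2T V, ∃ Qa ∈ Alt2T V, Q = Qs + Qa := by
  have h : (⊤ : Submodule ℝ (V ⊗[ℝ] V)) ≤ Sym2T V ⊔ Alt2T V := by
    rw [← TensorProduct.span_tmul_eq_top ℝ V V]
    refine Submodule.span_le.2 ?_
    rintro x ⟨a, b, rfl⟩
    have hx : a ⊗ₜ[ℝ] b =
        (2⁻¹ : ℝ) • (a ⊗ₜ[ℝ] b + b ⊗ₜ[ℝ] a) + (2⁻¹ : ℝ) • (a ⊗ₜ[ℝ] b - b ⊗ₜ[ℝ] a) := by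
      module
    rw [hx]
    exact Submodule.add_mem _
      (Submodule.mem_sup_left (Submodule.smul_mem _ _ (Submodule.subset_span ⟨a, b, rfl⟩)))
      (Submodule.mem_sup_right (Submodule.smul_mem _ _ (Submodule.subset_span ⟨a, b, rfl⟩)))
  obtain ⟨Qs, hQs, Qa, hQa, hsum⟩ := Submodule.mem_sup.1 (h Submodule.mem_top)
  exact ⟨Qs, hQs, Qa, hQa, hsum.symm⟩

lemma master (h : MemW S) (a b c d : V) :
    4 * S (a ⊗ₜ[ℝ] b) (c ⊗ₜ[ℝ] d) =
      S (a ⊗ₜ[ℝ] b + b ⊗ₜ[ℝ] a) (c ⊗ₜ[ℝ] d + d ⊗ₜ[ℝ] c)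
      - S (a ⊗ₜ[ℝ] c + c ⊗ₜ[ℝ] a) (b ⊗ₜ[ℝ] d + d ⊗ₜ[ℝ] b)
      + S (a ⊗ₜ[ℝ] d + d ⊗ₜ[ℝ] a) (b ⊗ₜ[ℝ] c + c ⊗ₜ[ℝ] b) := by
  obtain ⟨h1, h2, h3⟩ := h
  have e1 := h3 a b c d
  have e4 := h3 c d a b
  simp only [map_add, map_sub, LinearMap.add_apply, LinearMap.sub_apply] at e1 e4 ⊢
  linarith [h1 c a b d, h2 b d c a, h1 c a d b, h2 d b c a, h1 d a b c, h2 b c d a,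
    h2 a b c d, h2 a c d b, h2 a c b d, h1 c d a b, h1 c d b a, h1 d c a b, h1 d c b a]

lemma cs (hsymm : ∀ x y, S x y = S y x) (hpos : ∀ Q, 0 ≤ S Q Q) (x y : V ⊗[ℝ] V) :
    (S x y) ^ 2 ≤ S x x * S y y := by
  have h : ∀ t : ℝ, 0 ≤ S y y * (t * t) + (2 * S x y) * t + S x x := by
    intro t
    have h0 := hpos (x + t • y)
    simp only [map_add, map_smul, LinearMap.add_apply, LinearMap.smul_apply,
      smul_eq_mul] at h0
    rw [hsymm y x] at h0
    linarith
  have hd := discrim_le_zero h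
  rw [discrim] at hd
  nlinarith


/-- The symmetric bilinear form `a b ↦ φ(a⊗b + b⊗a)` on `V`. -/
def bil (φ : (V ⊗[ℝ] V) →ₗ[ℝ] ℝ) : V →ₗ[ℝ] V →ₗ[ℝ] ℝ :=
  LinearMap.mk₂ ℝ (fun a b => φ (a ⊗ₜ[ℝ] b + b ⊗ₜ[ℝ] a))
    (fun a a' b => by
      have h : (a + a') ⊗ₜ[ℝ] b + b ⊗ₜ[ℝ] (a + a')
          = (a ⊗ₜ[ℝ] b + b ⊗ₜ[ℝ] a) + (a' ⊗ₜ[ℝ] b + b ⊗ₜ[ℝ] a') := by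
        simp only [add_tmul, tmul_add]; abel
      rw [h, map_add])
    (fun r a b => by
      have h : (r • a) ⊗ₜ[ℝ] b + b ⊗ₜ[ℝ] (r • a) = r • (a ⊗ₜ[ℝ] b + b ⊗ₜ[ℝ] a) := by
        simp only [smul_tmul', tmul_smul, smul_add]
      rw [h, map_smul])
    (fun a b b' => by
      have h : a ⊗ₜ[ℝ] (b + b') + (b + b') ⊗ₜ[ℝ] a
          = (a ⊗ₜ[ℝ] b + b ⊗ₜ[ℝ] a) + (a ⊗ₜ[ℝ] b' + b' ⊗ₜ[ℝ] a) := by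
        simp only [add_tmul, tmul_add]; abel
      rw [h, map_add])
    (fun r a b => by
      have h : a ⊗ₜ[ℝ] (r • b) + (r • b) ⊗ₜ[ℝ] a = r • (a ⊗ₜ[ℝ] b + b ⊗ₜ[ℝ] a) := by
        simp only [smul_tmul', tmul_smul, smul_add]
      rw [h, map_smul])

lemma bil_apply (φ : (V ⊗[ℝ] V) →ₗ[ℝ] ℝ) (a b : V) :
    bil φ a b = φ (a ⊗ₜ[ℝ] b + b ⊗ₜ[ℝ] a) := by
  simp [bil]

lemma bil_comm (φ : (V ⊗[ℝ] V) →ₗ[ℝ] ℝ) (a b : V) : bil φ a b = bil φ b a := by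
  rw [bil_apply, bil_apply, add_comm]

/-- The element of `W` whose restriction to `Sym²V` is `4 φ ⊗ φ`. -/
def quadForm (φ : (V ⊗[ℝ] V) →ₗ[ℝ] ℝ) : QF V :=
  TensorProduct.lift <| LinearMap.mk₂ ℝ
    (fun a b => TensorProduct.lift <| LinearMap.mk₂ ℝ
      (fun c d => bil φ a b * bil φ c d - bil φ a c * bil φ b d + bil φ a d * bil φ b c)
      (fun c c' d => by simp [map_add]; ring)
      (fun r c d => by simp [map_smul, smul_eq_mul]; ring)
      (fun c d d' => by simp [map_add]; ring)
      (fun r c d => by simp [map_smul, smul_eq_mul]; ring))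
    (fun a a' b => TensorProduct.ext' fun c d => by
      simp [TensorProduct.lift.tmul, map_add]; ring)
    (fun r a b => TensorProduct.ext' fun c d => by
      simp [TensorProduct.lift.tmul, map_smul, smul_eq_mul]; ring)
    (fun a b b' => TensorProduct.ext' fun c d => by
      simp [TensorProduct.lift.tmul, map_add]; ring)
    (fun r a b => TensorProduct.ext' fun c d => by
      simp [TensorProduct.lift.tmul, map_smul, smul_eq_mul]; ring)

lemma quadForm_apply (φ : (V ⊗[ℝ] V) →ₗ[ℝ] ℝ) (a b c d : V) :
    quadForm φ (a ⊗ₜ[ℝ] b) (c ⊗ₜ[ℝ] d) =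
      bil φ a b * bil φ c d - bil φ a c * bil φ b d + bil φ a d * bil φ b c := by
  simp [quadForm, TensorProduct.lift.tmul]


lemma memW_quadForm (φ : (V ⊗[ℝ] V) →ₗ[ℝ] ℝ) : MemW (quadForm φ) := by
  refine ⟨fun a b c d => ?_, fun a b c d => ?_, fun a b c d => ?_⟩
  · rw [quadForm_apply, quadForm_apply, bil_comm φ c a, bil_comm φ d b, bil_comm φ c b,
      bil_comm φ d a]
    ring
  · rw [quadForm_apply, quadForm_apply, bil_comm φ c b, bil_comm φ d b, bil_comm φ d c]
    ring
  · simp only [map_add, map_sub, LinearMap.add_apply, LinearMap.sub_apply, quadForm_apply]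
    rw [bil_comm φ b a, bil_comm φ d c]
    ring

lemma quadForm_sym_gen (φ : (V ⊗[ℝ] V) →ₗ[ℝ] ℝ) (a b c d : V) :
    quadForm φ (a ⊗ₜ[ℝ] b + b ⊗ₜ[ℝ] a) (c ⊗ₜ[ℝ] d + d ⊗ₜ[ℝ] c) =
      4 * (φ (a ⊗ₜ[ℝ] b + b ⊗ₜ[ℝ] a) * φ (c ⊗ₜ[ℝ] d + d ⊗ₜ[ℝ] c)) := by
  have h1 : φ (a ⊗ₜ[ℝ] b + b ⊗ₜ[ℝ] a) = bil φ a b := (bil_apply φ a b).symm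
  have h2 : φ (c ⊗ₜ[ℝ] d + d ⊗ₜ[ℝ] c) = bil φ c d := (bil_apply φ c d).symm
  simp only [map_add, LinearMap.add_apply, quadForm_apply, h1, h2]
  rw [bil_comm φ b a, bil_comm φ d c]
  ring

lemma quadForm_sym (φ : (V ⊗[ℝ] V) →ₗ[ℝ] ℝ) {T T' : V ⊗[ℝ] V}
    (hT : T ∈ Sym2T V) (hT' : T' ∈ Sym2T V) :
    quadForm φ T T' = 4 * (φ T * φ T') := by
  have gen : ∀ a b : V, ∀ T' ∈ Sym2T V,
      quadForm φ (a ⊗ₜ[ℝ] b + b ⊗ₜ[ℝ] a) T' =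
        4 * (φ (a ⊗ₜ[ℝ] b + b ⊗ₜ[ℝ] a) * φ T') := by
    intro a b T' hT'
    have h0 := sym_ann
      (quadForm φ (a ⊗ₜ[ℝ] b + b ⊗ₜ[ℝ] a) - (4 * φ (a ⊗ₜ[ℝ] b + b ⊗ₜ[ℝ] a)) • φ)
      (fun c d => by
        simp only [LinearMap.sub_apply, LinearMap.smul_apply, smul_eq_mul]
        rw [quadForm_sym_gen]
        ring) hT'
    simp only [LinearMap.sub_apply, LinearMap.smul_apply, smul_eq_mul, sub_eq_zero] at h0
    rw [h0]; ring
  have h0 := sym_ann ((quadForm φ).flip T' - (4 * φ T') • φ)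
    (fun a b => by
      simp only [LinearMap.sub_apply, LinearMap.smul_apply, LinearMap.flip_apply,
        smul_eq_mul]
      rw [gen a b T' hT']
      ring) hT
  simp only [LinearMap.sub_apply, LinearMap.smul_apply, LinearMap.flip_apply,
    smul_eq_mul, sub_eq_zero] at h0
  rw [h0]; ring


lemma exists_bound {M : Type*} [AddCommGroup M] [Module ℝ M] [FiniteDimensional ℝ M]
    (b b' : M →ₗ[ℝ] M →ₗ[ℝ] ℝ) (hsymm : ∀ x y, b x y = b y x)
    (hpos : ∀ x, 0 ≤ b x x) (hdef : ∀ x, b x x = 0 → x = 0) :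
    ∃ c : ℝ, 0 < c ∧ ∀ x, |b' x x| ≤ c * b x x := by
  have hBsymm : b.IsSymm := ⟨fun x y => hsymm x y⟩
  obtain ⟨v, hv⟩ := LinearMap.BilinForm.exists_orthogonal_basis hBsymm
  have horth : ∀ i j, i ≠ j → b (v i) (v j) = 0 := fun i j hij =>
    LinearMap.isOrthoᵢ_def.1 hv i j hij
  rcases isEmpty_or_nonempty (Fin (Module.finrank ℝ M)) with hemp | hne
  · refine ⟨1, one_pos, fun x => ?_⟩
    have hx : x = 0 := by
      have := v.sum_repr x
      simpa using this.symm
    simp [hx]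
  · have expand : ∀ f : M →ₗ[ℝ] M →ₗ[ℝ] ℝ, ∀ x : M,
        f x x = ∑ i, ∑ j, v.repr x i * (v.repr x j * f (v i) (v j)) := by
      intro f x
      conv_lhs => rw [← v.sum_repr x]
      simp only [map_sum, LinearMap.sum_apply, map_smul, LinearMap.smul_apply, smul_eq_mul,
        Finset.mul_sum]
      rw [Finset.sum_comm]
      exact Finset.sum_congr rfl fun i _ => Finset.sum_congr rfl fun j _ => by ring
    set nn : ℝ := (Module.finrank ℝ M : ℝ) with hnn_def
    set d : Fin (Module.finrank ℝ M) → ℝ := fun i => b (v i) (v i) with hd_def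
    have hd : ∀ i, 0 < d i := fun i =>
      lt_of_le_of_ne (hpos _) (fun h => v.ne_zero i (hdef _ h.symm))
    set δ : ℝ := Finset.univ.inf' Finset.univ_nonempty d with hδ_def
    have hδ : 0 < δ := (Finset.lt_inf'_iff _).2 fun i _ => hd i
    have hδ_le : ∀ i, δ ≤ d i := fun i => Finset.inf'_le _ (Finset.mem_univ i)
    set Mx : ℝ := Finset.univ.sup' Finset.univ_nonempty
      (fun p : Fin (Module.finrank ℝ M) × Fin (Module.finrank ℝ M) =>
        |b' (v p.1) (v p.2)|) with hMx_def
    have hM : ∀ i j, |b' (v i) (v j)| ≤ Mx := fun i j => by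
      rw [hMx_def]
      exact Finset.le_sup'
        (fun p : Fin (Module.finrank ℝ M) × Fin (Module.finrank ℝ M) =>
          |b' (v p.1) (v p.2)|) (Finset.mem_univ (i, j))
    obtain ⟨i0⟩ := hne
    have hM0 : 0 ≤ Mx := le_trans (abs_nonneg _) (hM i0 i0)
    refine ⟨(Mx * nn + 1) / δ, by positivity, fun x => ?_⟩
    set r : Fin (Module.finrank ℝ M) → ℝ := fun i => v.repr x i with hr_def
    set s2v : ℝ := ∑ i, (r i) ^ 2 with hs2v_def
    have hs2v : 0 ≤ s2v := Finset.sum_nonneg fun i _ => sq_nonneg _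
    have hbxx : b x x = ∑ i, d i * (r i) ^ 2 := by
      rw [expand b x]
      refine Finset.sum_congr rfl fun i _ => ?_
      rw [Finset.sum_eq_single i]
      · rw [hd_def]; ring
      · intro j _ hj
        rw [horth i j (Ne.symm hj)]
        ring
      · intro h
        exact absurd (Finset.mem_univ i) h
    have hb_ge : δ * s2v ≤ b x x := by
      rw [hbxx, hs2v_def, Finset.mul_sum]
      exact Finset.sum_le_sum fun i _ =>
        mul_le_mul_of_nonneg_right (hδ_le i) (sq_nonneg _)
    have hsumid : ∑ i, ∑ j, Mx * ((r i) ^ 2 + (r j) ^ 2) / 2 = Mx * nn * s2v := by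
      have e1 : ∀ i, ∑ j, Mx * ((r i) ^ 2 + (r j) ^ 2) / 2
          = Mx * (nn * (r i) ^ 2 + s2v) / 2 := by
        intro i
        rw [← Finset.sum_div, ← Finset.mul_sum, Finset.sum_add_distrib, Finset.sum_const,
          Finset.card_univ, Fintype.card_fin, nsmul_eq_mul, ← hs2v_def, ← hnn_def]
      rw [Finset.sum_congr rfl fun i _ => e1 i, ← Finset.sum_div, ← Finset.mul_sum,
        Finset.sum_add_distrib, ← Finset.mul_sum, Finset.sum_const, Finset.card_univ,
        Fintype.card_fin, nsmul_eq_mul, ← hs2v_def, ← hnn_def]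
      ring
    have hb'_le : |b' x x| ≤ Mx * nn * s2v := by
      rw [expand b' x]
      calc |∑ i, ∑ j, r i * (r j * b' (v i) (v j))|
          ≤ ∑ i, |∑ j, r i * (r j * b' (v i) (v j))| := Finset.abs_sum_le_sum_abs _ _
        _ ≤ ∑ i, ∑ j, |r i * (r j * b' (v i) (v j))| :=
            Finset.sum_le_sum fun i _ => Finset.abs_sum_le_sum_abs _ _
        _ ≤ ∑ i, ∑ j, Mx * ((r i) ^ 2 + (r j) ^ 2) / 2 := by
            refine Finset.sum_le_sum fun i _ => Finset.sum_le_sum fun j _ => ?_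
            rw [abs_mul, abs_mul]
            have h1 : |b' (v i) (v j)| ≤ Mx := hM i j
            have h2 : |r i| * |r j| ≤ ((r i) ^ 2 + (r j) ^ 2) / 2 := by
              nlinarith [sq_nonneg (|r i| - |r j|), sq_abs (r i), sq_abs (r j)]
            nlinarith [abs_nonneg (r i), abs_nonneg (r j), abs_nonneg (b' (v i) (v j)),
              mul_nonneg (abs_nonneg (r i)) (abs_nonneg (r j))]
        _ = Mx * nn * s2v := hsumid
    have hcδ : (Mx * nn + 1) / δ * δ = Mx * nn + 1 := div_mul_cancel₀ _ (ne_of_gt hδ)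
    have hcpos : 0 ≤ (Mx * nn + 1) / δ := by positivity
    have h3 : (Mx * nn + 1) / δ * (δ * s2v) ≤ (Mx * nn + 1) / δ * b x x :=
      mul_le_mul_of_nonneg_left hb_ge hcpos
    nlinarith [hb'_le, h3, hs2v, hM0]


lemma memW_combo {S₀ S₁ : QF V} (h₀ : MemW S₀) (h₁ : MemW S₁) (r t : ℝ) :
    MemW (r • S₀ + t • S₁) := by
  refine ⟨fun a b c d => ?_, fun a b c d => ?_, fun a b c d => ?_⟩ <;>
    simp only [LinearMap.add_apply, LinearMap.smul_apply, smul_eq_mul]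
  · rw [h₀.1 a b c d, h₁.1 a b c d]
  · rw [h₀.2.1 a b c d, h₁.2.1 a b c d]
  · rw [h₀.2.2 a b c d, h₁.2.2 a b c d]
    ring

lemma sym_mem (a b : V) : a ⊗ₜ[ℝ] b + b ⊗ₜ[ℝ] a ∈ Sym2T V :=
  Submodule.subset_span ⟨a, b, rfl⟩

lemma arith_sym (u w eta eps A : ℝ) (hu : 0 ≤ u) (hw : w ^ 2 ≤ A * u)
    (he1 : -eps ≤ eta) (he2 : eta ≤ eps) (heps : 0 < eps) (hA : 0 < A)
    (hεA : 4 * eps * A ≤ 1 / 2) : 0 ≤ 1 / 2 * u + eta * (4 * (w * w)) := by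
  nlinarith [sq_nonneg w, mul_le_mul_of_nonneg_left hw (by positivity : (0:ℝ) ≤ 4 * eps),
    mul_le_mul_of_nonneg_right hεA hu]

lemma arith_alt (u p eta eps c : ℝ) (hu : 0 ≤ u) (hp : |p| ≤ c * u)
    (he1 : -eps ≤ eta) (he2 : eta ≤ eps) (heps : 0 < eps) (hc : 0 < c)
    (hεc : eps * c ≤ 1 / 2) : 0 ≤ 1 / 2 * u + eta * p := by
  have h1 : -(|p|) ≤ p := neg_abs_le _
  have h2 : p ≤ |p| := le_abs_self _
  have h3 : 0 ≤ |p| := abs_nonneg _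
  nlinarith [mul_le_mul_of_nonneg_left hp (le_of_lt heps),
    mul_le_mul_of_nonneg_right hεc hu]

set_option maxHeartbeats 2000000 in
lemma part1 [FiniteDimensional ℝ V] (S : QF V) (hCW : MemCW S)
    (hnd : ∀ Q ∈ Alt2T V, (∀ Q' ∈ Alt2T V, S Q Q' = 0) → Q = 0)
    (hnr : ¬ RSrankOne S) : ¬ IsExtremalCW S := by
  intro hext
  obtain ⟨hW, hpos⟩ := hCW
  have hsym := memW_symm hW
  have hCS := cs hsym hpos
  by_cases hg : ∀ T ∈ Sym2T V, S T T = 0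
  · -- R(S) = 0 forces S = 0, contradicting extremality.
    have hST : ∀ T ∈ Sym2T V, ∀ T' ∈ Sym2T V, S T T' = 0 := by
      intro T hT T' hT'
      have h := hCS T T'
      have h1 := hg T hT
      have h2 := hg T' hT'
      nlinarith [sq_nonneg (S T T')]
    have hS0 : S = 0 := by
      refine TensorProduct.ext' fun a b => TensorProduct.ext' fun c d => ?_
      have hm := master hW a b c d
      rw [hST _ (sym_mem a b) _ (sym_mem c d), hST _ (sym_mem a c) _ (sym_mem b d),
        hST _ (sym_mem a d) _ (sym_mem b c)] at hm
      simp only [LinearMap.zero_apply]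
      linarith
    exact hext.2.1 hS0
  · push_neg at hg
    obtain ⟨T₀, hT₀mem, hT₀⟩ := hg
    have hA : 0 < S T₀ T₀ := lt_of_le_of_ne (hpos T₀) (Ne.symm hT₀)
    set A : ℝ := S T₀ T₀ with hA_def
    set φ : (V ⊗[ℝ] V) →ₗ[ℝ] ℝ := S T₀ with hφ_def
    set P : QF V := quadForm φ with hP_def
    have hPW : MemW P := memW_quadForm φ
    -- bound on the antisymmetric part
    have hfd : FiniteDimensional ℝ ↥(Alt2T V) := inferInstance
    set bAlt : ↥(Alt2T V) →ₗ[ℝ] ↥(Alt2T V) →ₗ[ℝ] ℝ :=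
      S.compl₁₂ (Alt2T V).subtype (Alt2T V).subtype with hbAlt_def
    set pAlt : ↥(Alt2T V) →ₗ[ℝ] ↥(Alt2T V) →ₗ[ℝ] ℝ :=
      P.compl₁₂ (Alt2T V).subtype (Alt2T V).subtype with hpAlt_def
    have hbAlt_apply : ∀ x y : ↥(Alt2T V), bAlt x y = S ↑x ↑y := fun x y => rfl
    have hpAlt_apply : ∀ x y : ↥(Alt2T V), pAlt x y = P ↑x ↑y := fun x y => rfl
    obtain ⟨c, hc, hbound⟩ := exists_bound bAlt pAlt
      (fun x y => hsym ↑x ↑y)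
      (fun x => hpos ↑x)
      (fun x hx => by
        have hker : ∀ Q' ∈ Alt2T V, S ↑x Q' = 0 := by
          intro Q' hQ'
          have h1 := hCS (↑x : V ⊗[ℝ] V) Q'
          have hx' : S ↑x ↑x = 0 := hx
          rw [hx'] at h1
          have h2 : S ↑x Q' ^ 2 = 0 := le_antisymm (by linarith) (sq_nonneg _)
          exact pow_eq_zero_iff two_ne_zero |>.1 h2
        have := hnd ↑x x.2 hker
        exact Subtype.ext this)
    have hboundQ : ∀ Q ∈ Alt2T V, |P Q Q| ≤ c * S Q Q := fun Q hQ =>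
      hbound ⟨Q, hQ⟩
    -- the perturbation parameter
    set ε : ℝ := min (1 / (2 * c)) (1 / (16 * A)) with hε_def
    have hεpos : 0 < ε := lt_min (div_pos one_pos (by linarith)) (div_pos one_pos (by linarith))
    have hεc : ε * c ≤ 1 / 2 := by
      have h1 : ε ≤ 1 / (2 * c) := min_le_left _ _
      have hc' : c ≠ 0 := ne_of_gt hc
      calc ε * c ≤ (1 / (2 * c)) * c := mul_le_mul_of_nonneg_right h1 (le_of_lt hc)
        _ = 1 / 2 := by field_simp
    have hεA : 4 * ε * A ≤ 1 / 2 := by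
      have h1 : ε ≤ 1 / (16 * A) := min_le_right _ _
      have h2 : ε * A ≤ (1 / (16 * A)) * A := mul_le_mul_of_nonneg_right h1 (le_of_lt hA)
      have hA' : A ≠ 0 := ne_of_gt hA
      have h3 : (1 / (16 * A)) * A = 1 / 16 := by field_simp
      linarith
    set S₀ : QF V := (1/2 : ℝ) • S + ε • P with hS₀_def
    set S₁ : QF V := (1/2 : ℝ) • S + (-ε) • P with hS₁_def
    have hsplit : S = S₀ + S₁ := by
      rw [hS₀_def, hS₁_def]; module
    have hW₀ : MemW S₀ := memW_combo hW hPW (1/2) ε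
    have hW₁ : MemW S₁ := memW_combo hW hPW (1/2) (-ε)
    -- nonnegativity of both summands
    have hpos' : ∀ η : ℝ, |η| ≤ ε → ∀ Q, 0 ≤ ((1/2 : ℝ) • S + η • P) Q Q := by
      intro η hη Q
      obtain ⟨Qs, hQs, Qa, hQa, rfl⟩ := decomp Q
      set F : QF V := (1/2 : ℝ) • S + η • P with hF_def
      have hFW : MemW F := memW_combo hW hPW (1/2) η
      have hcross1 : F Qs Qa = 0 := memW_cross hFW hQs hQa
      have hcross2 : F Qa Qs = 0 := by rw [memW_symm hFW]; exact hcross1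
      have hexp : F (Qs + Qa) (Qs + Qa) = F Qs Qs + F Qa Qa := by
        simp only [map_add, LinearMap.add_apply]
        rw [hcross1, hcross2]
        ring
      rw [hexp]
      have hsympart : 0 ≤ F Qs Qs := by
        have hval : F Qs Qs = (1/2) * S Qs Qs + η * (4 * (φ Qs * φ Qs)) := by
          simp only [hF_def, hP_def, LinearMap.add_apply, LinearMap.smul_apply, smul_eq_mul]
          rw [quadForm_sym φ hQs hQs]
        rw [hval]
        have h4 : (φ Qs) ^ 2 ≤ A * S Qs Qs := hCS T₀ Qs
        exact arith_sym (S Qs Qs) (φ Qs) η ε A (hpos Qs) h4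
          (neg_le_of_abs_le hη) (le_of_abs_le hη) hεpos hA hεA
      have haltpart : 0 ≤ F Qa Qa := by
        have hval : F Qa Qa = (1/2) * S Qa Qa + η * P Qa Qa := by
          simp only [hF_def, LinearMap.add_apply, LinearMap.smul_apply, smul_eq_mul]
        rw [hval]
        exact arith_alt (S Qa Qa) (P Qa Qa) η ε c (hpos Qa) (hboundQ Qa hQa)
          (neg_le_of_abs_le hη) (le_of_abs_le hη) hεpos hc hεc
      linarith
    have hpos₀ : ∀ Q, 0 ≤ S₀ Q Q := fun Q => hpos' ε (by rw [abs_of_pos hεpos]) Q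
    have hpos₁ : ∀ Q, 0 ≤ S₁ Q Q := fun Q =>
      hpos' (-ε) (by rw [abs_neg, abs_of_pos hεpos]) Q
    obtain ⟨⟨a, _, hS₀eq⟩, _⟩ := hext.2.2 S₀ S₁ ⟨hW₀, hpos₀⟩ ⟨hW₁, hpos₁⟩ hsplit
    -- deduce rank one
    have hφT₀ : φ T₀ = A := by rw [hφ_def]
    have hAne : A ≠ 0 := ne_of_gt hA
    have hκ' : ∀ T ∈ Sym2T V, ∀ T' ∈ Sym2T V,
        4 * ε * (φ T * φ T') = (a - 1/2) * S T T' := by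
      intro T hT T' hT'
      have h1 := LinearMap.congr_fun (LinearMap.congr_fun hS₀eq T) T'
      simp only [hS₀_def, hP_def, LinearMap.add_apply, LinearMap.smul_apply,
        smul_eq_mul] at h1
      rw [quadForm_sym φ hT hT'] at h1
      linear_combination h1
    have ha2 : a - 1/2 = 4 * ε * A := by
      have h := hκ' T₀ hT₀mem T₀ hT₀mem
      rw [hφT₀] at h
      have h2 : (a - 1/2) * A = (4 * ε * A) * A := by
        linear_combination -h + (a - 1/2) * hA_def
      exact mul_right_cancel₀ hAne h2
    have hε4 : (4 : ℝ) * ε ≠ 0 := ne_of_gt (by linarith)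
    have hφφ : ∀ T ∈ Sym2T V, ∀ T' ∈ Sym2T V, φ T * φ T' = A * S T T' := by
      intro T hT T' hT'
      have h := hκ' T hT T' hT'
      rw [ha2] at h
      exact mul_left_cancel₀ hε4 (by linear_combination h)
    have hsq : Real.sqrt A * Real.sqrt A = A := Real.mul_self_sqrt (le_of_lt hA)
    have hsqpos : 0 < Real.sqrt A := Real.sqrt_pos.2 hA
    have hAinv : (Real.sqrt A)⁻¹ * (Real.sqrt A)⁻¹ * A = 1 := by
      rw [← mul_inv, hsq, inv_mul_cancel₀ hAne]
    refine hnr ⟨(Real.sqrt A)⁻¹ • φ, ⟨T₀, hT₀mem, ?_⟩, fun T hT T' hT' => ?_⟩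
    · simp only [LinearMap.smul_apply, smul_eq_mul]
      rw [hφT₀]
      positivity
    · simp only [LinearMap.smul_apply, smul_eq_mul]
      have h1 := hφφ T hT T' hT'
      linear_combination (-((Real.sqrt A)⁻¹ * (Real.sqrt A)⁻¹)) * h1 - S T T' * hAinv


lemma alt_mem (a b : V) : a ⊗ₜ[ℝ] b - b ⊗ₜ[ℝ] a ∈ Alt2T V :=
  Submodule.subset_span ⟨a, b, rfl⟩

set_option maxHeartbeats 1000000 in
lemma part2 [FiniteDimensional ℝ V] (hdim : 2 < Module.finrank ℝ V) (S : QF V)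
    (hext : IsExtremalCW S) :
    ∃ Q ∈ Alt2T V, Q ≠ 0 ∧ ∀ Q' ∈ Alt2T V, S Q Q' = 0 := by
  by_contra hcon
  have hnd : ∀ Q ∈ Alt2T V, (∀ Q' ∈ Alt2T V, S Q Q' = 0) → Q = 0 := by
    intro Q hQ hker
    by_contra hne
    exact hcon ⟨Q, hQ, hne, hker⟩
  have hr : RSrankOne S := by
    by_contra hnr
    exact part1 S hext.1 hnd hnr hext
  obtain ⟨φ, ⟨Tw, hTw, hTwne⟩, hfact⟩ := hr
  obtain ⟨hW, hpos⟩ := hext.1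
  -- pointwise formula for S in terms of ψ = bil φ
  have hpt : ∀ a b c d : V, 4 * S (a ⊗ₜ[ℝ] b) (c ⊗ₜ[ℝ] d) =
      bil φ a b * bil φ c d - bil φ a c * bil φ b d + bil φ a d * bil φ b c := by
    intro a b c d
    have hm := master hW a b c d
    rw [hfact _ (sym_mem a b) _ (sym_mem c d), hfact _ (sym_mem a c) _ (sym_mem b d),
      hfact _ (sym_mem a d) _ (sym_mem b c)] at hm
    rw [hm]
    simp only [bil_apply]
  have halt : ∀ a b c d : V, S (a ⊗ₜ[ℝ] b - b ⊗ₜ[ℝ] a) (c ⊗ₜ[ℝ] d - d ⊗ₜ[ℝ] c) =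
      bil φ a d * bil φ b c - bil φ a c * bil φ b d := by
    intro a b c d
    simp only [map_sub, LinearMap.sub_apply]
    have h1 := hpt a b c d
    have h2 := hpt a b d c
    rw [bil_comm φ d c] at h2
    have h3 := hpt b a c d
    rw [bil_comm φ b a] at h3
    have h4 := hpt b a d c
    rw [bil_comm φ b a, bil_comm φ d c] at h4
    linarith
  -- orthogonal basis for ψ
  have hψsymm : (bil φ).IsSymm := ⟨fun x y => bil_comm φ x y⟩
  obtain ⟨e, he⟩ := LinearMap.BilinForm.exists_orthogonal_basis hψsymm
  have horth : ∀ i j, i ≠ j → bil φ (e i) (e j) = 0 := fun i j h =>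
    LinearMap.isOrthoᵢ_def.1 he i j h
  have hprod : ∀ i j, i ≠ j → bil φ (e i) (e i) * bil φ (e j) (e j) ≤ 0 := by
    intro i j hij
    have h0 := hpos (e i ⊗ₜ[ℝ] e j - e j ⊗ₜ[ℝ] e i)
    rw [halt (e i) (e j) (e i) (e j), horth i j hij, horth j i (Ne.symm hij)] at h0
    linarith
  -- three distinct indices
  have h0n : (0 : ℕ) < Module.finrank ℝ V := by omega
  have h1n : (1 : ℕ) < Module.finrank ℝ V := by omega
  have h2n : (2 : ℕ) < Module.finrank ℝ V := by omega
  set i0 : Fin (Module.finrank ℝ V) := ⟨0, h0n⟩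
  set i1 : Fin (Module.finrank ℝ V) := ⟨1, h1n⟩
  set i2 : Fin (Module.finrank ℝ V) := ⟨2, h2n⟩
  have h01 : i0 ≠ i1 := by simp [i0, i1, Fin.ext_iff]
  have h02 : i0 ≠ i2 := by simp [i0, i2, Fin.ext_iff]
  have h12 : i1 ≠ i2 := by simp [i1, i2, Fin.ext_iff]
  -- some eigenvalue vanishes
  have hzero : ∃ k, bil φ (e k) (e k) = 0 := by
    by_cases hv0 : bil φ (e i0) (e i0) = 0
    · exact ⟨i0, hv0⟩
    by_cases hv1 : bil φ (e i1) (e i1) = 0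
    · exact ⟨i1, hv1⟩
    refine ⟨i2, ?_⟩
    by_contra hv2
    have p01 := hprod i0 i1 h01
    have p02 := hprod i0 i2 h02
    have p12 := hprod i1 i2 h12
    have hlt01 : bil φ (e i0) (e i0) * bil φ (e i1) (e i1) < 0 :=
      lt_of_le_of_ne p01 (mul_ne_zero hv0 hv1)
    have hlt02 : bil φ (e i0) (e i0) * bil φ (e i2) (e i2) < 0 :=
      lt_of_le_of_ne p02 (mul_ne_zero hv0 hv2)
    have hlt12 : bil φ (e i1) (e i1) * bil φ (e i2) (e i2) < 0 :=
      lt_of_le_of_ne p12 (mul_ne_zero hv1 hv2)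
    nlinarith [mul_pos_of_neg_of_neg hlt02 hlt12, sq_nonneg (bil φ (e i2) (e i2))]
  obtain ⟨k, hk⟩ := hzero
  -- ψ (e k) vanishes identically
  have hψk : ∀ v : V, bil φ (e k) v = 0 := by
    have h0 : bil φ (e k) = (0 : V →ₗ[ℝ] ℝ) := by
      refine e.ext fun i => ?_
      by_cases hki : k = i
      · subst hki; simpa using hk
      · simpa using horth k i hki
    intro v
    rw [h0]
    rfl
  -- a second index
  set j : Fin (Module.finrank ℝ V) := if k = i0 then i1 else i0 with hj_def
  have hkj : k ≠ j := by
    by_cases h : k = i0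
    · rw [hj_def, if_pos h, h]; exact h01
    · rw [hj_def, if_neg h]; exact h
  -- the witness
  refine hcon ⟨e k ⊗ₜ[ℝ] e j - e j ⊗ₜ[ℝ] e k, alt_mem (e k) (e j), ?_, ?_⟩
  · intro h0
    have hrep := congrArg (fun z => ((Module.Basis.tensorProduct e e).repr z) (k, j)) h0
    simp only [map_sub, Finsupp.sub_apply, Module.Basis.tensorProduct_repr_tmul_apply,
      Module.Basis.repr_self, map_zero, Finsupp.coe_zero, Pi.zero_apply, smul_eq_mul] at hrep
    rw [Finsupp.single_apply, Finsupp.single_apply, Finsupp.single_apply,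
      Finsupp.single_apply] at hrep
    simp [hkj, Ne.symm hkj] at hrep
  · have hker : ∀ Q' ∈ Alt2T V, S (e k ⊗ₜ[ℝ] e j - e j ⊗ₜ[ℝ] e k) Q' = 0 := by
      intro Q' hQ'
      refine alt_ann _ (fun c d => ?_) hQ'
      rw [halt (e k) (e j) c d, hψk d, hψk c]
      ring
    exact hker

end Stmt10Aux

/-- (1) If `S ∈ C_W` is such that `R'(S)` is nondegenerate on `Λ²V` and `R(S)` is not
extremal in `C_Sym` (does not have rank one), then `S` is not extremal in `C_W`.
(2) If `dim V > 2`, then every extremal `S ∈ C_W` has `ker R'(S) ≠ {0}`. -/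
theorem stmt10 {V : Type*} [AddCommGroup V] [Module ℝ V] [FiniteDimensional ℝ V] :
    (∀ S : QF V, MemCW S →
      (∀ Q ∈ Alt2T V, (∀ Q' ∈ Alt2T V, S Q Q' = 0) → Q = 0) →
      ¬ RSrankOne S → ¬ IsExtremalCW S) ∧
    (2 < Module.finrank ℝ V →
      ∀ S : QF V, IsExtremalCW S →
        ∃ Q ∈ Alt2T V, Q ≠ 0 ∧ ∀ Q' ∈ Alt2T V, S Q Q' = 0) := by
  exact ⟨fun S hCW hnd hnr => Stmt10Aux.part1 S hCW hnd hnr,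
    fun hdim S hext => Stmt10Aux.part2 hdim S hext⟩
end
end

section
/- Let S ∈ C_W be totally symmetric (i.e. S ∈ Sym⁴V* ∩ C_W) and suppose there exists x ∈ V \ {0} with x⊗x ∈ ker S. Then for every v ∈ V, both x⊗v ∈ ker S and v⊗x ∈ ker S. -/
open TensorProduct

noncomputable section

variable {V : Type*} [AddCommGroup V] [Module ℝ V]

/-- If `S ∈ Sym⁴V* ∩ C_W` and `x ⊗ x ∈ ker S` for some nonzero `x ∈ V`, then
`x ⊗ v ∈ ker S` and `v ⊗ x ∈ ker S` for every `v ∈ V`. -/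
theorem stmt12 {V : Type*} [AddCommGroup V] [Module ℝ V] [FiniteDimensional ℝ V]
    (S : QF V) (hS : MemCW S) (htot : IsTotSym S)
    (x : V) (hx : x ≠ 0) (hker : x ⊗ₜ[ℝ] x ∈ LinearMap.ker S) :
    ∀ v : V, x ⊗ₜ[ℝ] v ∈ LinearMap.ker S ∧ v ⊗ₜ[ℝ] x ∈ LinearMap.ker S := by
  -- Global symmetry of `S`
  have hsymm : ∀ P Q : V ⊗[ℝ] V, S P Q = S Q P := by
    intro P Q
    induction P using TensorProduct.induction_on with
    | zero => simp
    | tmul a b =>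
      induction Q using TensorProduct.induction_on with
      | zero => simp
      | tmul c d => exact hS.1.1 a b c d
      | add P₁ P₂ h₁ h₂ => simp [h₁, h₂]
    | add P₁ P₂ h₁ h₂ =>
      simp [map_add, LinearMap.add_apply, h₁, h₂]
  -- Cauchy–Schwarz degenerate case: null vectors are in the kernel
  have hcs : ∀ Q : V ⊗[ℝ] V, S Q Q = 0 → ∀ Q' : V ⊗[ℝ] V, S Q Q' = 0 := by
    intro Q hQ Q'
    by_contra ha
    set a := S Q Q' with hadef
    set b := S Q' Q' with hbdef
    have hb : 0 ≤ b := hS.2 Q'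
    have hkey : ∀ t : ℝ, 0 ≤ 2 * t * a + t ^ 2 * b := by
      intro t
      have := hS.2 (Q + t • Q')
      simp only [map_add, map_smul, LinearMap.add_apply, LinearMap.smul_apply,
        smul_eq_mul] at this
      have hsw : S Q' Q = a := by rw [hadef, hsymm]
      rw [hQ, hsw] at this
      nlinarith [this]
    have ht := hkey (-(a / (b + 1)))
    have hb1 : (0:ℝ) < b + 1 := by linarith
    have ha2 : 0 < a ^ 2 := by positivity
    have : 2 * (-(a / (b + 1))) * a + (-(a / (b + 1))) ^ 2 * b
        = -(a ^ 2 * (b + 2)) / (b + 1) ^ 2 := by field_simp; ring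
    rw [this] at ht
    have h2 : (0:ℝ) < (b + 1) ^ 2 := by positivity
    rw [le_div_iff₀ h2] at ht
    nlinarith
  have hxx : ∀ Q' : V ⊗[ℝ] V, S (x ⊗ₜ[ℝ] x) Q' = 0 := by
    intro Q'
    have := LinearMap.mem_ker.mp hker
    rw [this]; rfl
  intro v
  constructor
  · rw [LinearMap.mem_ker]
    apply LinearMap.ext
    intro Q'
    have hnull : S (x ⊗ₜ[ℝ] v) (x ⊗ₜ[ℝ] v) = 0 := by
      rw [(htot x v x v).2.1]
      exact hxx (v ⊗ₜ[ℝ] v)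
    simpa using hcs _ hnull Q'
  · rw [LinearMap.mem_ker]
    apply LinearMap.ext
    intro Q'
    have hnull : S (v ⊗ₜ[ℝ] x) (v ⊗ₜ[ℝ] x) = 0 := by
      rw [(htot v x v x).2.1, hsymm]
      exact hxx (v ⊗ₜ[ℝ] v)
    simpa using hcs _ hnull Q'
end
end
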